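/- arXiv:2206.00094 — 10 statements merged into one kernel-verified Lean document; each statement's English description precedes it below -/
import Mathlib

section
/- Let n ≥ 1 and let 𝒫 be a tagged partition of C = {1,…,n}. The polydiagonal subspace Δ_𝒫 is an evenly tagged anti-synchrony subspace if and only if the all-ones vector 𝟙 = (1,…,1) is orthogonal to Δ_𝒫, i.e., ∑_{i=1}^n x_i = 0 for every x ∈ Δ_𝒫. -/
/-- A tagged partition of `{1,…,n}` (modeled as `Fin n`): a partition into nonempty
classes together with a partial involution on the classes having at most one fixed point.
The partial involution is encoded by `star`, with `star P = none` meaning `*` is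
undefined at `P` (in particular `star P = none` for any `P` that is not a class). -/
structure TaggedPartition (n : ℕ) where
  classes : Set (Set (Fin n))
  classes_nonempty : ∀ P ∈ classes, P.Nonempty
  cover : ∀ i : Fin n, ∃ P ∈ classes, i ∈ P
  eq_of_inter : ∀ P ∈ classes, ∀ Q ∈ classes, (P ∩ Q).Nonempty → P = Q
  star : Set (Fin n) → Option (Set (Fin n))
  star_dom : ∀ P, star P ≠ none → P ∈ classes
  star_ran : ∀ P Q, star P = some Q → Q ∈ classes
  star_invol : ∀ P Q, star P = some Q → star Q = some P
  star_fixed : ∀ P Q, star P = some P → star Q = some Q → P = Q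

/-- The polydiagonal subspace `Δ_tp ⊆ ℝⁿ` of a tagged partition:
`x_i = x_j` whenever `[i] = [j]`, and `x_i = -x_j` whenever `[i]* = [j]`. -/
def TaggedPartition.polydiag {n : ℕ} (tp : TaggedPartition n) : Set (Fin n → ℝ) :=
  {x | (∀ P ∈ tp.classes, ∀ i ∈ P, ∀ j ∈ P, x i = x j) ∧
       (∀ P Q, tp.star P = some Q → ∀ i ∈ P, ∀ j ∈ Q, x i = - x j)}

/-- `Δ_tp` is a synchrony subspace: the partial involution is the empty function. -/
def TaggedPartition.IsSynchrony {n : ℕ} (tp : TaggedPartition n) : Prop :=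
  ∀ P, tp.star P = none

/-- Fully tagged: the partial involution is defined on every class. -/
def TaggedPartition.FullyTagged {n : ℕ} (tp : TaggedPartition n) : Prop :=
  ∀ P ∈ tp.classes, tp.star P ≠ none

/-- Evenly tagged: fully tagged and `#P = #P*` for every class `P`. -/
def TaggedPartition.EvenlyTagged {n : ℕ} (tp : TaggedPartition n) : Prop :=
  tp.FullyTagged ∧ ∀ P Q, tp.star P = some Q → P.ncard = Q.ncard

/-!
A vector of `Δ_tp` is constant on each class and takes opposite values on `P` and `P*`. When
every class is tagged and `#P = #P*`, the class sums therefore cancel in pairs, the class fixed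
by `*` having sum zero. Conversely, orthogonality to the indicator of an untagged class `P` would
give `#P = 0`, and orthogonality to `𝟙_P - 𝟙_{P*}` gives `#P = #P*`; as `n ≥ 1` there is a
class, so the involution is not empty.
-/

open Finset

namespace TaggedPartition

variable {n : ℕ} (tp : TaggedPartition n)

noncomputable def cls (i : Fin n) : Set (Fin n) :=
  (tp.cover i).choose

theorem cls_mem_classes (i : Fin n) : tp.cls i ∈ tp.classes :=
  (tp.cover i).choose_spec.1

theorem mem_cls (i : Fin n) : i ∈ tp.cls i :=
  (tp.cover i).choose_spec.2

theorem cls_eq_iff_mem {P : Set (Fin n)} (hP : P ∈ tp.classes) {i : Fin n} :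
    tp.cls i = P ↔ i ∈ P :=
  ⟨fun h => h ▸ tp.mem_cls i,
    fun hi => tp.eq_of_inter _ (tp.cls_mem_classes i) P hP ⟨i, tp.mem_cls i, hi⟩⟩

theorem card_filter_cls_eq {P : Set (Fin n)} [DecidablePred fun i => tp.cls i = P]
    (hP : P ∈ tp.classes) : #{i | tp.cls i = P} = P.ncard := by
  classical
  rw [Set.ncard_eq_toFinset_card']
  congr 1
  ext i
  simp [tp.cls_eq_iff_mem hP]

theorem sum_ite_cls_eq {P : Set (Fin n)} [DecidablePred fun i => tp.cls i = P]
    (hP : P ∈ tp.classes) : ∑ i, (if tp.cls i = P then (1 : ℝ) else 0) = P.ncard := by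
  rw [sum_boole, tp.card_filter_cls_eq hP]

theorem star_eq_some_iff {P Q A : Set (Fin n)} (hPQ : tp.star P = some Q) :
    tp.star A = some Q ↔ A = P :=
  ⟨fun hAQ => Option.some_inj.1 ((tp.star_invol A Q hAQ).symm.trans (tp.star_invol P Q hPQ)),
    fun hAP => hAP ▸ hPQ⟩

theorem comp_cls_mem_polydiag (f : Set (Fin n) → ℝ)
    (hf : ∀ P Q, tp.star P = some Q → f Q = - f P) :
    (fun i => f (tp.cls i)) ∈ tp.polydiag := by
  refine ⟨fun P hP i hi j hj => ?_, fun P Q hPQ i hi j hj => ?_⟩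
  · simp only [(tp.cls_eq_iff_mem hP).2 hi, (tp.cls_eq_iff_mem hP).2 hj]
  · have hP : P ∈ tp.classes := tp.star_dom P (by simp [hPQ])
    simp only [(tp.cls_eq_iff_mem hP).2 hi,
      (tp.cls_eq_iff_mem (tp.star_ran P Q hPQ)).2 hj, hf P Q hPQ, neg_neg]

open Classical in
noncomputable def classSum (x : Fin n → ℝ) (P : Set (Fin n)) : ℝ :=
  ∑ i with tp.cls i = P, x i

theorem classSum_eq_ncard_mul {x : Fin n → ℝ} {P : Set (Fin n)} {c : ℝ}
    (hP : P ∈ tp.classes) (hc : ∀ i ∈ P, x i = c) : tp.classSum x P = P.ncard * c := by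
  classical
  rw [classSum, sum_congr rfl fun i hi => hc i ((tp.cls_eq_iff_mem hP).1 (mem_filter.1 hi).2),
    sum_const, tp.card_filter_cls_eq hP, nsmul_eq_mul]

theorem classSum_add_classSum_eq_zero {x : Fin n → ℝ} {P Q : Set (Fin n)}
    (hx : x ∈ tp.polydiag) (hPQ : tp.star P = some Q) (hcard : P.ncard = Q.ncard) :
    tp.classSum x P + tp.classSum x Q = 0 := by
  have hP : P ∈ tp.classes := tp.star_dom P (by simp [hPQ])
  have hQ : Q ∈ tp.classes := tp.star_ran P Q hPQ
  obtain ⟨j, hj⟩ := tp.classes_nonempty Q hQ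
  rw [tp.classSum_eq_ncard_mul hP fun i hi => hx.2 P Q hPQ i hi j hj,
    tp.classSum_eq_ncard_mul hQ fun i hi => hx.1 Q hQ i hi j hj, hcard]
  ring

theorem sum_eq_zero_of_evenlyTagged (htp : tp.EvenlyTagged) {x : Fin n → ℝ}
    (hx : x ∈ tp.polydiag) : ∑ i, x i = 0 := by
  classical
  obtain ⟨hfull, hcard⟩ := htp
  have hstar : ∀ P ∈ tp.classes, tp.star P = some ((tp.star P).getD ∅) := fun P hP =>
    (Option.getD_of_ne_none (hfull P hP) ∅).symm
  have hpair : ∀ P ∈ tp.classes, tp.classSum x P + tp.classSum x ((tp.star P).getD ∅) = 0 :=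
    fun P hP => tp.classSum_add_classSum_eq_zero hx (hstar P hP) (hcard _ _ (hstar P hP))
  rw [← sum_fiberwise_of_maps_to (t := tp.classes.toFinset) (g := tp.cls)
    fun i _ => Set.mem_toFinset.2 (tp.cls_mem_classes i)]
  refine sum_involution (fun P _ => (tp.star P).getD ∅)
    (fun P hP => hpair P (Set.mem_toFinset.1 hP)) (fun P hP hne hfix => hne ?_)
    (fun P hP => ?_) (fun P hP => ?_)
  · have := hpair P (Set.mem_toFinset.1 hP)
    rw [hfix] at this
    exact add_self_eq_zero.1 this
  · exact Set.mem_toFinset.2 (tp.star_ran _ _ (hstar P (Set.mem_toFinset.1 hP)))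
  · simp [tp.star_invol _ _ (hstar P (Set.mem_toFinset.1 hP))]

section

open Classical

theorem fullyTagged_of_forall_sum_eq_zero (h : ∀ x ∈ tp.polydiag, ∑ i, x i = 0) :
    tp.FullyTagged := by
  intro P₀ hP₀ hnone
  have hmem : (fun i => if tp.cls i = P₀ then (1 : ℝ) else 0) ∈ tp.polydiag :=
    tp.comp_cls_mem_polydiag (fun R => if R = P₀ then 1 else 0) fun P Q hPQ => by
      have hP : P ≠ P₀ := by rintro rfl; simp [hPQ] at hnone
      have hQ : Q ≠ P₀ := by rintro rfl; simp [tp.star_invol _ _ hPQ] at hnone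
      simp [hP, hQ]
  have hsum := h _ hmem
  rw [tp.sum_ite_cls_eq hP₀, Nat.cast_eq_zero, Set.ncard_eq_zero] at hsum
  exact (tp.classes_nonempty P₀ hP₀).ne_empty hsum

theorem ncard_eq_of_forall_sum_eq_zero (h : ∀ x ∈ tp.polydiag, ∑ i, x i = 0)
    {P Q : Set (Fin n)} (hPQ : tp.star P = some Q) : P.ncard = Q.ncard := by
  have hmem : (fun i => (if tp.cls i = P then (1 : ℝ) else 0) - if tp.cls i = Q then 1 else 0)
      ∈ tp.polydiag :=
    tp.comp_cls_mem_polydiag (fun R => (if R = P then 1 else 0) - if R = Q then 1 else 0)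
      fun A B hAB => by
        have hBQ : B = Q ↔ A = P := by rw [← tp.star_eq_some_iff hPQ, hAB, Option.some_inj]
        have hBP : B = P ↔ A = Q := by
          rw [← tp.star_eq_some_iff (tp.star_invol _ _ hPQ), hAB, Option.some_inj]
        simp only [hBQ, hBP]
        ring
  have hsum := h _ hmem
  rw [sum_sub_distrib, tp.sum_ite_cls_eq (tp.star_dom P (by simp [hPQ])),
    tp.sum_ite_cls_eq (tp.star_ran P Q hPQ), sub_eq_zero] at hsum
  exact_mod_cast hsum

end

end TaggedPartition

/-- Proposition 3.10. For `n ≥ 1`, `Δ_tp` is an evenly tagged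
anti-synchrony subspace iff the all-ones vector is orthogonal to `Δ_tp`,
i.e. `∑ i, x i = 0` for every `x ∈ Δ_tp`. -/
theorem evenlyTagged_antiSynchrony_iff_sum_eq_zero {n : ℕ} (hn : 1 ≤ n)
    (tp : TaggedPartition n) :
    (¬ tp.IsSynchrony ∧ tp.EvenlyTagged) ↔ ∀ x ∈ tp.polydiag, ∑ i, x i = 0 := by
  refine ⟨fun ⟨_, htp⟩ _ hx => tp.sum_eq_zero_of_evenlyTagged htp hx, fun h => ?_⟩
  have hfull := tp.fullyTagged_of_forall_sum_eq_zero h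
  refine ⟨fun hsync => ?_, hfull, fun P Q => tp.ncard_eq_of_forall_sum_eq_zero h⟩
  obtain ⟨P, hP, -⟩ := tp.cover ⟨0, hn⟩
  exact hfull P hP (hsync P)
end

section
/- Let f : ℝ^k → ℝ^k, H ∈ ℝ^{k×k}, M ∈ ℝ^{n×n}, and let F : (ℝ^k)^n → (ℝ^k)^n be the associated network vector field. Assume N ∈ ℝ^{k×k} satisfies f(Ny) = Nf(y) for all y ∈ ℝ^k and HN = NH = H. For ℓ ∈ {1,…,n} define γ_ℓ : (ℝ^k)^n → (ℝ^k)^n by γ_ℓ(x) = (x_1,…,N x_ℓ,…,x_n) (apply N only in coordinate ℓ). Then F(γ_ℓ(x)) = γ_ℓ(F(x)) for all x ∈ (ℝ^k)^n. -/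
/-- The network vector field `F : (ℝᵏ)ⁿ → (ℝᵏ)ⁿ` with internal dynamics `f`,
coupling matrix `H` and network matrix `M`:
`F_i(x) = f(x_i) + H (∑_j M_{ij} x_j)`. -/
def netF {k n : ℕ} (f : (Fin k → ℝ) → Fin k → ℝ) (H : Matrix (Fin k) (Fin k) ℝ)
    (M : Matrix (Fin n) (Fin n) ℝ) (x : Fin n → Fin k → ℝ) : Fin n → Fin k → ℝ :=
  fun i => f (x i) + H.mulVec (∑ j, M i j • x j)

/-!
Since `HN = H`, the coupling matrix `H` cannot see whether `N` was applied to `x_ℓ`, so every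
coupling term `H (∑_j M_{ij} x_j)` is unchanged by `γ_ℓ`. Hence `F_i ∘ γ_ℓ = F_i` for `i ≠ ℓ`,
while in coordinate `ℓ` the equivariance of `f` and `NH = H` pull `N` out of both summands.
-/

open Function Matrix

namespace Matrix

variable {R m ι : Type*} [CommSemiring R] [Fintype m] [DecidableEq ι] {H N : Matrix m m R}

theorem mulVec_update_mulVec_of_mul_eq (hHN : H * N = H) (x : ι → m → R) (ℓ j : ι) :
    H *ᵥ update x ℓ (N *ᵥ x ℓ) j = H *ᵥ x j := by
  rcases eq_or_ne j ℓ with rfl | hj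
  · rw [update_self, mulVec_mulVec, hHN]
  · rw [update_of_ne hj]

theorem mulVec_sum_smul_update_mulVec_of_mul_eq [Fintype ι] (hHN : H * N = H) (c : ι → R)
    (x : ι → m → R) (ℓ : ι) :
    H *ᵥ ∑ j, c j • update x ℓ (N *ᵥ x ℓ) j = H *ᵥ ∑ j, c j • x j := by
  simp only [mulVec_sum, mulVec_smul, mulVec_update_mulVec_of_mul_eq hHN]

end Matrix

/-- Proposition 4.8. If `f(Ny) = Nf(y)` for all `y` and
`HN = NH = H`, then `F` commutes with `γ_ℓ`, the map applying `N` in the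
`ℓ`-th coordinate only. -/
theorem netF_comm_gamma {k n : ℕ} (f : (Fin k → ℝ) → Fin k → ℝ)
    (H N : Matrix (Fin k) (Fin k) ℝ) (M : Matrix (Fin n) (Fin n) ℝ)
    (hf : ∀ y : Fin k → ℝ, f (N.mulVec y) = N.mulVec (f y))
    (hHN : H * N = H) (hNH : N * H = H) (ℓ : Fin n) (x : Fin n → Fin k → ℝ) :
    netF f H M (Function.update x ℓ (N.mulVec (x ℓ))) =
      Function.update (netF f H M x) ℓ (N.mulVec (netF f H M x ℓ)) := by
  have coupling (i : Fin n) :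
      H *ᵥ ∑ j, M i j • update x ℓ (N *ᵥ x ℓ) j = H *ᵥ ∑ j, M i j • x j :=
    mulVec_sum_smul_update_mulVec_of_mul_eq hHN (M i) x ℓ
  funext i
  rcases eq_or_ne i ℓ with rfl | hi
  · simp only [netF, update_self, coupling, hf, mulVec_add, mulVec_mulVec, hNH]
  · simp only [netF, update_of_ne hi, coupling]
end

section
/- Let f : ℝ^k → ℝ^k, H ∈ ℝ^{k×k}, M ∈ ℝ^{n×n}, and let F : (ℝ^k)^n → (ℝ^k)^n be the associated network vector field. Let 𝒫 be a tagged partition of {1,…,n} such that the polydiagonal subspace Δ_𝒫 ⊆ ℝ^n is M-invariant. Assume N ∈ ℝ^{k×k} satisfies N² = I, f(Ny) = Nf(y) for all y ∈ ℝ^k, and HN = NH = −H. Define Δ_𝒫^N := {(x_1,…,x_n) ∈ (ℝ^k)^n : x_i = x_j whenever [i] = [j], and x_i = N x_j whenever [i] = [j]*}. Then F maps Δ_𝒫^N into itself: F(x) ∈ Δ_𝒫^N for every x ∈ Δ_𝒫^N. -/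
/-- The subspace `Δ_tp^N ⊆ (ℝᵏ)ⁿ`: `x_i = x_j` whenever `[i] = [j]`, and
`x_i = N x_j` whenever `[i] = [j]*`. -/
def TaggedPartition.polydiagN {n k : ℕ} (tp : TaggedPartition n)
    (N : Matrix (Fin k) (Fin k) ℝ) : Set (Fin n → Fin k → ℝ) :=
  {x | (∀ P ∈ tp.classes, ∀ i ∈ P, ∀ j ∈ P, x i = x j) ∧
       (∀ P Q, tp.star Q = some P → ∀ i ∈ P, ∀ j ∈ Q, x i = N.mulVec (x j))}

/-!
Write `L = ½(1 - N)`. Since `N² = 1`, `L` sends `Δ_𝒫^N` into `Δ_𝒫^{-1} = Δ_𝒫 ⊗ ℝᵏ`, which the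
coupling matrix `M` preserves coordinatewise; since `NH = -H`, `H` sends `Δ_𝒫^{-1}` back into
`Δ_𝒫^N`. As `HN = -H` gives `HL = H`, the coupling term of `F` factors through these three maps,
and the internal term `f(x_i)` stays in `Δ_𝒫^N` because `f` commutes with `N`.
-/

open Matrix

namespace TaggedPartition

variable {n k : ℕ} (tp : TaggedPartition n)

theorem add_mem_polydiagN {N : Matrix (Fin k) (Fin k) ℝ} {x y : Fin n → Fin k → ℝ}
    (hx : x ∈ tp.polydiagN N) (hy : y ∈ tp.polydiagN N) : x + y ∈ tp.polydiagN N := by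
  refine ⟨fun P hP i hi j hj => ?_, fun P Q hQP i hi j hj => ?_⟩
  · simp only [Pi.add_apply, hx.1 P hP i hi j hj, hy.1 P hP i hi j hj]
  · simp only [Pi.add_apply, hx.2 P Q hQP i hi j hj, hy.2 P Q hQP i hi j hj, mulVec_add]

theorem comp_mem_polydiagN {N N' : Matrix (Fin k) (Fin k) ℝ} {g : (Fin k → ℝ) → Fin k → ℝ}
    (hg : ∀ y, g (N *ᵥ y) = N' *ᵥ g y) {x : Fin n → Fin k → ℝ} (hx : x ∈ tp.polydiagN N) :
    (fun i => g (x i)) ∈ tp.polydiagN N' :=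
  ⟨fun P hP i hi j hj => by dsimp only; rw [hx.1 P hP i hi j hj],
   fun P Q hQP i hi j hj => by dsimp only; rw [hx.2 P Q hQP i hi j hj, hg]⟩

theorem mulVec_mem_polydiagN {N N' L : Matrix (Fin k) (Fin k) ℝ} (hL : L * N = N' * L)
    {x : Fin n → Fin k → ℝ} (hx : x ∈ tp.polydiagN N) :
    (fun i => L *ᵥ x i) ∈ tp.polydiagN N' :=
  tp.comp_mem_polydiagN (fun y => by rw [mulVec_mulVec, hL, ← mulVec_mulVec]) hx

theorem mem_polydiagN_neg_one_iff {x : Fin n → Fin k → ℝ} :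
    x ∈ tp.polydiagN (-1) ↔ ∀ c, (fun i => x i c) ∈ tp.polydiag := by
  simp only [polydiagN, polydiag, Set.mem_ofPred_eq, neg_mulVec, one_mulVec,
    funext_iff, Pi.neg_apply]
  constructor
  · rintro ⟨hclass, hstar⟩ c
    exact ⟨fun P hP i hi j hj => hclass P hP i hi j hj c,
      fun P Q hPQ i hi j hj => hstar P Q (tp.star_invol P Q hPQ) i hi j hj c⟩
  · intro h
    exact ⟨fun P hP i hi j hj c => (h c).1 P hP i hi j hj,
      fun P Q hQP i hi j hj c => (h c).2 P Q (tp.star_invol Q P hQP) i hi j hj⟩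

theorem sum_smul_mem_polydiagN_neg_one {M : Matrix (Fin n) (Fin n) ℝ}
    (hM : ∀ x ∈ tp.polydiag, M *ᵥ x ∈ tp.polydiag) {x : Fin n → Fin k → ℝ}
    (hx : x ∈ tp.polydiagN (-1)) : (fun i => ∑ j, M i j • x j) ∈ tp.polydiagN (-1) := by
  rw [mem_polydiagN_neg_one_iff] at hx ⊢
  intro c
  convert hM _ (hx c) using 1
  ext i
  simp [mulVec, dotProduct, Finset.sum_apply]

end TaggedPartition

/-- Proposition 4.11. Suppose `Δ_tp` is `M`-invariant, `N² = I`,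
`f(Ny) = Nf(y)` for all `y`, and `HN = NH = −H`. Then `F` maps `Δ_tp^N` into itself. -/
theorem netF_maps_polydiagN {k n : ℕ} (f : (Fin k → ℝ) → Fin k → ℝ)
    (H N : Matrix (Fin k) (Fin k) ℝ) (M : Matrix (Fin n) (Fin n) ℝ)
    (tp : TaggedPartition n)
    (hMinv : ∀ x ∈ tp.polydiag, M.mulVec x ∈ tp.polydiag)
    (hN2 : N * N = 1)
    (hf : ∀ y : Fin k → ℝ, f (N.mulVec y) = N.mulVec (f y))
    (hHN : H * N = -H) (hNH : N * H = -H) :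
    ∀ x ∈ tp.polydiagN N, netF f H M x ∈ tp.polydiagN N := by
  intro x hx
  set L : Matrix (Fin k) (Fin k) ℝ := (2 : ℝ)⁻¹ • (1 - N)
  have hLN : L * N = -1 * L := by
    simp only [L, Matrix.smul_mul, sub_mul, hN2, one_mul, neg_mul, smul_sub]
    abel
  have hHL : H * L = H := by
    simp only [L, Matrix.mul_smul, mul_sub, hHN, mul_one, sub_neg_eq_add, ← two_smul ℝ H,
      smul_smul]
    norm_num
  have hcoupling : ∀ i, H *ᵥ (∑ j, M i j • x j) = H *ᵥ (∑ j, M i j • (L *ᵥ x j)) := fun i => by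
    simp only [← mulVec_smul, ← mulVec_sum, mulVec_mulVec, hHL]
  have hLx := tp.mulVec_mem_polydiagN hLN hx
  have hMLx := tp.sum_smul_mem_polydiagN_neg_one hMinv hLx
  have hHMLx := tp.mulVec_mem_polydiagN (by rw [hNH, mul_neg_one] : H * -1 = N * H) hMLx
  simp only [← hcoupling] at hHMLx
  exact tp.add_mem_polydiagN (tp.comp_mem_polydiagN hf hx) hHMLx
end

section
/- Let H ∈ ℝ^{k×k} be nonzero, M ∈ ℝ^{n×n}, and let W be a linear subspace of (ℝ^k)^n. Then the following are equivalent: (i) for every odd function f : ℝ^k → ℝ^k the map (x_1,…,x_n) ↦ (f(x_1),…,f(x_n)) sends W into W, and the linear map x ↦ (H ∑_{j} M_{1j} x_j, …, H ∑_{j} M_{nj} x_j) sends W into W; (ii) there is a tagged partition 𝒫 of {1,…,n} such that Δ_𝒫 is M-invariant and W = ℝ^k ⊗ Δ_𝒫. -/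
/-- The subspace `ℝᵏ ⊗ Δ_tp ⊆ (ℝᵏ)ⁿ`: `x_i = x_j` whenever `[i] = [j]`, and
`x_i = -x_j` whenever `[i]* = [j]`. -/
def TaggedPartition.polydiagV {n : ℕ} (tp : TaggedPartition n) (k : ℕ) :
    Set (Fin n → Fin k → ℝ) :=
  {x | (∀ P ∈ tp.classes, ∀ i ∈ P, ∀ j ∈ P, x i = x j) ∧
       (∀ P Q, tp.star P = some Q → ∀ i ∈ P, ∀ j ∈ Q, x i = - x j)}

lemma Submodule.exists_mem_forall_mem_imp_le {ι K M : Type*} [Field K] [Infinite K]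
    [AddCommGroup M] [Module K M] [Finite ι] (W : Submodule K M) (p : ι → Submodule K M) :
    ∃ w ∈ W, ∀ i, w ∈ p i → W ≤ p i := by
  obtain ⟨w, hw⟩ := Submodule.exists_forall_notMem_of_forall_ne_top
    (fun i : {i // ¬ W ≤ p i} => (p i).comap W.subtype)
    (fun i hi => i.2 fun x hx => by simpa using hi.ge (Submodule.mem_top (x := ⟨x, hx⟩)))
  exact ⟨w, w.2, fun i hwi => by_contra fun hi => hw ⟨i, hi⟩ hwi⟩

theorem Function.exists_odd_comp_eq {ι α β : Type*} [InvolutiveNeg α] [AddGroup β]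
    {w : ι → α} {x : ι → β} (hsync : x.FactorsThrough w)
    (hanti : ∀ i j, w i = -w j → x i = -x j) :
    ∃ f : α → β, (∀ y, f (-y) = -f y) ∧ ∀ i, f (w i) = x i := by
  -- Extending along `±w`, whose range is symmetric, makes the extension odd.
  set w' : ι ⊕ ι → α := Sum.elim w (-w)
  set x' : ι ⊕ ι → β := Sum.elim x (-x)
  have hw' : ∀ a, w' a.swap = -w' a := by rintro (i | i) <;> simp [w']
  have hx' : ∀ a, x' a.swap = -x' a := by rintro (i | i) <;> simp [x']
  have hfac : x'.FactorsThrough w' := by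
    rintro (i | i) (j | j) h
    · exact hsync h
    · exact hanti i j h
    · simp [x', hanti j i (by simpa [w'] using h.symm)]
    · simpa [x'] using hsync (neg_injective h)
  refine ⟨Function.extend w' x' 0, fun y => ?_, fun i => hfac.extend_apply 0 (.inl i)⟩
  by_cases hy : ∃ a, w' a = y
  · obtain ⟨a, rfl⟩ := hy
    rw [← hw', hfac.extend_apply, hfac.extend_apply, hx']
  · have hy' : ¬∃ a, w' a = -y := fun ⟨a, ha⟩ => hy ⟨a.swap, by rw [hw', ha, neg_neg]⟩
    rw [Function.extend_apply' _ _ _ hy, Function.extend_apply' _ _ _ hy', Pi.zero_apply,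
      Pi.zero_apply, neg_zero]

namespace TaggedPartition

variable {n : ℕ} {V : Type*}

section Sync

variable (S : Set (Fin n → V))

def Sync (i j : Fin n) : Prop := ∀ x ∈ S, x i = x j

def syncSetoid : Setoid (Fin n) where
  r := Sync S
  iseqv := ⟨fun _ _ _ => rfl, fun h x hx => (h x hx).symm,
    fun h h' x hx => (h x hx).trans (h' x hx)⟩

def syncClass (a : Fin n) : Set (Fin n) := {i | Sync S i a}

variable {S}

theorem Sync.symm {i j : Fin n} (h : Sync S i j) : Sync S j i := (syncSetoid S).symm h

theorem Sync.trans {i j l : Fin n} (h : Sync S i j) (h' : Sync S j l) : Sync S i l :=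
  (syncSetoid S).trans h h'

theorem syncClass_mem_classes (a : Fin n) : syncClass S a ∈ (syncSetoid S).classes :=
  Setoid.mem_classes _ a

theorem mem_syncClass_self (a : Fin n) : a ∈ syncClass S a := fun _ _ => rfl

theorem syncClass_eq_iff {a b : Fin n} : syncClass S a = syncClass S b ↔ Sync S a b := by
  refine ⟨fun h => (show a ∈ syncClass S b from h ▸ mem_syncClass_self a), fun h => ?_⟩
  exact Set.ext fun i => ⟨fun hi => hi.trans h, fun hi => hi.trans h.symm⟩

end Sync

section AntiSync

variable [InvolutiveNeg V] (S : Set (Fin n → V))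

def AntiSync (i j : Fin n) : Prop := ∀ x ∈ S, x i = -x j

def antiImage (P : Set (Fin n)) : Set (Fin n) := {j | ∃ i ∈ P, AntiSync S i j}

open scoped Classical in
noncomputable def antiStar (P : Set (Fin n)) : Option (Set (Fin n)) :=
  if ∃ a b, AntiSync S a b ∧ P = syncClass S a then some (antiImage S P) else none

variable {S}

theorem AntiSync.symm {i j : Fin n} (h : AntiSync S i j) : AntiSync S j i :=
  fun x hx => by rw [h x hx, neg_neg]

theorem AntiSync.of_sync {i j a b : Fin n} (hia : Sync S i a) (hab : AntiSync S a b)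
    (hjb : Sync S j b) : AntiSync S i j :=
  fun x hx => by rw [hia x hx, hab x hx, hjb x hx]

theorem antiImage_syncClass {a b : Fin n} (h : AntiSync S a b) :
    antiImage S (syncClass S a) = syncClass S b := by
  ext j
  refine ⟨fun ⟨i, hia, hij⟩ => ?_,
    fun hjb => ⟨a, mem_syncClass_self a, h.of_sync (fun _ _ => rfl) hjb⟩⟩
  exact fun x hx => by rw [hij.symm x hx, hia x hx, h x hx, neg_neg]

theorem antiStar_eq_some_iff {P Q : Set (Fin n)} :
    antiStar S P = some Q ↔ ∃ a b, AntiSync S a b ∧ P = syncClass S a ∧ Q = syncClass S b := by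
  unfold antiStar
  split_ifs with hP
  · obtain ⟨a, b, hab, rfl⟩ := hP
    rw [Option.some_inj, antiImage_syncClass hab]
    refine ⟨fun hQ => ⟨a, b, hab, rfl, hQ.symm⟩, fun ⟨a', b', hab', haa', hQ⟩ => ?_⟩
    have hbb' : Sync S b b' := fun x hx => by
      rw [hab.symm x hx, syncClass_eq_iff.1 haa' x hx, hab' x hx, neg_neg]
    rw [hQ, syncClass_eq_iff.2 hbb']
  · simp only [false_iff]
    rintro ⟨a, b, hab, rfl, -⟩
    exact hP ⟨a, b, hab, rfl⟩

end AntiSync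

section OfSet

variable [AddGroup V] [IsAddTorsionFree V]

theorem AntiSync.eq_zero_of_sync {S : Set (Fin n → V)} {a b : Fin n} (hab : AntiSync S a b)
    (hba : Sync S b a) : ∀ x ∈ S, x a = 0 :=
  fun x hx => self_eq_neg.1 ((hab x hx).trans (by rw [hba x hx]))

noncomputable def ofSet (S : Set (Fin n → V)) : TaggedPartition n where
  classes := (syncSetoid S).classes
  classes_nonempty := by
    rintro _ ⟨a, rfl⟩
    exact ⟨a, mem_syncClass_self a⟩
  cover i := ⟨_, syncClass_mem_classes i, mem_syncClass_self i⟩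
  eq_of_inter _ hP _ hQ := fun ⟨_, hiP, hiQ⟩ => Setoid.eq_of_mem_classes hP hiP hQ hiQ
  star := antiStar S
  star_dom P hP := by
    obtain ⟨Q, hPQ⟩ := Option.ne_none_iff_exists'.1 hP
    obtain ⟨a, -, -, rfl, -⟩ := antiStar_eq_some_iff.1 hPQ
    exact syncClass_mem_classes a
  star_ran P Q hPQ := by
    obtain ⟨-, b, -, -, rfl⟩ := antiStar_eq_some_iff.1 hPQ
    exact syncClass_mem_classes b
  star_invol P Q hPQ := by
    obtain ⟨a, b, hab, rfl, rfl⟩ := antiStar_eq_some_iff.1 hPQ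
    exact antiStar_eq_some_iff.2 ⟨b, a, hab.symm, rfl, rfl⟩
  star_fixed P Q hP hQ := by
    obtain ⟨a, b, hab, rfl, hba⟩ := antiStar_eq_some_iff.1 hP
    obtain ⟨c, d, hcd, rfl, hdc⟩ := antiStar_eq_some_iff.1 hQ
    have ha := hab.eq_zero_of_sync (syncClass_eq_iff.1 hba).symm
    have hc := hcd.eq_zero_of_sync (syncClass_eq_iff.1 hdc).symm
    exact syncClass_eq_iff.2 fun x hx => (ha x hx).trans (hc x hx).symm

end OfSet

theorem exists_generic_mem {K : Type*} [Field K] [Infinite K] [AddCommGroup V] [Module K V]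
    (W : Submodule K (Fin n → V)) :
    ∃ w ∈ W, (∀ i j, w i = w j → Sync (W : Set (Fin n → V)) i j) ∧
      ∀ i j, w i = -w j → AntiSync (W : Set (Fin n → V)) i j := by
  obtain ⟨w, hw, hgen⟩ := W.exists_mem_forall_mem_imp_le (Sum.elim
    (fun ij : Fin n × Fin n => LinearMap.eqLocus (LinearMap.proj ij.1) (LinearMap.proj ij.2))
    (fun ij : Fin n × Fin n => LinearMap.eqLocus (LinearMap.proj ij.1) (-LinearMap.proj ij.2)))
  exact ⟨w, hw, fun i j h x hx => hgen (.inl (i, j)) h hx,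
    fun i j h x hx => hgen (.inr (i, j)) h hx⟩

variable {k : ℕ}

theorem mem_polydiagV_ofSet_iff {S : Set (Fin n → Fin k → ℝ)} {x : Fin n → Fin k → ℝ} :
    x ∈ (ofSet S).polydiagV k ↔
      (∀ i j, Sync S i j → x i = x j) ∧ ∀ i j, AntiSync S i j → x i = -x j := by
  refine ⟨fun hx => ⟨fun i j h => ?_, fun i j h => ?_⟩, fun ⟨hsync, hanti⟩ => ⟨?_, ?_⟩⟩
  · exact hx.1 _ (syncClass_mem_classes j) i h j (mem_syncClass_self j)
  · exact hx.2 _ _ (antiStar_eq_some_iff.2 ⟨i, j, h, rfl, rfl⟩) i (mem_syncClass_self i) j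
      (mem_syncClass_self j)
  · rintro _ ⟨a, rfl⟩ i hi j hj
    exact hsync i j (Sync.trans hi (Sync.symm hj))
  · intro P Q hPQ i hi j hj
    obtain ⟨a, b, hab, rfl, rfl⟩ := antiStar_eq_some_iff.1 hPQ
    exact hanti i j (hab.of_sync hi hj)

theorem subset_polydiagV_ofSet (S : Set (Fin n → Fin k → ℝ)) : S ⊆ (ofSet S).polydiagV k :=
  fun x hx => mem_polydiagV_ofSet_iff.2 ⟨fun _ _ h => h x hx, fun _ _ h => h x hx⟩

theorem polydiagV_ofSet_subset (W : Submodule ℝ (Fin n → Fin k → ℝ))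
    (hodd : ∀ f : (Fin k → ℝ) → Fin k → ℝ, (∀ y, f (-y) = -f y) →
      ∀ x ∈ W, (fun i => f (x i)) ∈ W) :
    (ofSet (W : Set (Fin n → Fin k → ℝ))).polydiagV k ⊆ W := by
  intro x hx
  obtain ⟨hsync, hanti⟩ := mem_polydiagV_ofSet_iff.1 hx
  obtain ⟨w, hw, hwsync, hwanti⟩ := exists_generic_mem W
  obtain ⟨f, hf, hfw⟩ := Function.exists_odd_comp_eq (fun i j h => hsync i j (hwsync i j h))
    fun i j h => hanti i j (hwanti i j h)
  exact funext hfw ▸ hodd f hf w hw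

theorem mem_polydiagV_iff {tp : TaggedPartition n} {x : Fin n → Fin k → ℝ} :
    x ∈ tp.polydiagV k ↔ ∀ d, (fun i => x i d) ∈ tp.polydiag := by
  simp only [polydiagV, polydiag, Set.mem_ofPred_eq, funext_iff, Pi.neg_apply]
  grind

theorem smul_mem_polydiagV_iff (tp : TaggedPartition n) {v : Fin k → ℝ} (hv : v ≠ 0)
    {y : Fin n → ℝ} : (fun i => y i • v) ∈ tp.polydiagV k ↔ y ∈ tp.polydiag := by
  simp only [polydiagV, polydiag, Set.mem_ofPred_eq, ← neg_smul,
    (smul_left_injective ℝ hv).eq_iff]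

theorem map_mem_polydiagV {k' : ℕ} (tp : TaggedPartition n) {f : (Fin k → ℝ) → Fin k' → ℝ}
    (hf : ∀ y, f (-y) = -f y) {x : Fin n → Fin k → ℝ} (hx : x ∈ tp.polydiagV k) :
    (fun i => f (x i)) ∈ tp.polydiagV k' :=
  ⟨fun P hP i hi j hj => congrArg f (hx.1 P hP i hi j hj),
    fun P Q hPQ i hi j hj => by simp only [hx.2 P Q hPQ i hi j hj, hf]⟩

theorem sum_smul_mem_polydiagV {tp : TaggedPartition n} {M : Matrix (Fin n) (Fin n) ℝ}
    (hM : ∀ y ∈ tp.polydiag, M.mulVec y ∈ tp.polydiag) {x : Fin n → Fin k → ℝ}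
    (hx : x ∈ tp.polydiagV k) : (fun i => ∑ j, M i j • x j) ∈ tp.polydiagV k := by
  rw [mem_polydiagV_iff] at hx ⊢
  intro d
  convert hM _ (hx d) using 1
  ext i
  simp [Matrix.mulVec, dotProduct, Finset.sum_apply]

theorem polydiag_invariant_of_coupling {tp : TaggedPartition n} {H : Matrix (Fin k) (Fin k) ℝ}
    (hH : H ≠ 0) {M : Matrix (Fin n) (Fin n) ℝ}
    (hcoup : ∀ x ∈ tp.polydiagV k, (fun i => H.mulVec (∑ j, M i j • x j)) ∈ tp.polydiagV k) :
    ∀ y ∈ tp.polydiag, M.mulVec y ∈ tp.polydiag := by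
  obtain ⟨e, he⟩ : ∃ e, H.mulVec e ≠ 0 := by
    by_contra! h
    exact hH (Matrix.toLin'.injective (LinearMap.ext fun e => by simp [h e]))
  intro y hy
  have hcoup_smul :
      (fun i => H.mulVec (∑ j, M i j • y j • e)) = fun i => (M.mulVec y) i • H.mulVec e := by
    ext1 i
    simp only [smul_smul, ← Finset.sum_smul, Matrix.mulVec_smul, Matrix.mulVec, dotProduct]
  rw [← smul_mem_polydiagV_iff tp he, ← hcoup_smul]
  exact hcoup _ ((smul_mem_polydiagV_iff tp fun h => he (by simp [h])).2 hy)

end TaggedPartition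

/-- Proposition 4.4(1). For nonzero `H`, a subspace
`W ⊆ (ℝᵏ)ⁿ` is invariant under all diagonal maps built from odd `f` and under the
linear coupling map iff `W = ℝᵏ ⊗ Δ_tp` for some `M`-invariant polydiagonal
subspace `Δ_tp`. -/
theorem invariant_all_odd_iff_polydiagV {k n : ℕ}
    (H : Matrix (Fin k) (Fin k) ℝ) (hH : H ≠ 0) (M : Matrix (Fin n) (Fin n) ℝ)
    (W : Submodule ℝ (Fin n → Fin k → ℝ)) :
    ((∀ f : (Fin k → ℝ) → Fin k → ℝ, (∀ y, f (-y) = -f y) →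
        ∀ x ∈ W, (fun i => f (x i)) ∈ W) ∧
      (∀ x ∈ W, (fun i => H.mulVec (∑ j, M i j • x j)) ∈ W)) ↔
    (∃ tp : TaggedPartition n,
      (∀ x ∈ tp.polydiag, M.mulVec x ∈ tp.polydiag) ∧
      (W : Set (Fin n → Fin k → ℝ)) = tp.polydiagV k) := by
  open TaggedPartition in
  constructor
  · rintro ⟨hodd, hcoup⟩
    have hW :
        (W : Set (Fin n → Fin k → ℝ)) = (ofSet (W : Set (Fin n → Fin k → ℝ))).polydiagV k :=
      (subset_polydiagV_ofSet _).antisymm (polydiagV_ofSet_subset W hodd)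
    refine ⟨_, polydiag_invariant_of_coupling hH fun x hx => ?_, hW⟩
    rw [← hW] at hx ⊢
    exact hcoup x hx
  · rintro ⟨tp, hM, hW⟩
    simp only [← SetLike.mem_coe, hW]
    exact ⟨fun f hf x hx => tp.map_mem_polydiagV hf hx,
      fun x hx => tp.map_mem_polydiagV (fun y => Matrix.mulVec_neg y H)
        (sum_smul_mem_polydiagV hM hx)⟩
end

section
/- Let M ∈ ℝ^{n×n} and let λ ∈ ℝ be an eigenvalue of M whose eigenspace {x ∈ ℝ^n : Mx = λx} is one-dimensional (geometric multiplicity 1). Let v_L be an eigenvector of Mᵀ with eigenvalue λ and let v_R be an eigenvector of M with eigenvalue λ. If W ⊆ ℝ^n is an M-invariant subspace, then v_R ∈ W or v_L ∈ W^⊥ (i.e., v_L · w = 0 for all w ∈ W). -/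
/-!
If `vL` is not orthogonal to `W`, then the functional `x ↦ vL ⬝ x` is nonzero on `W` but vanishes
on the range of `M - μ` (as `vL` is a left eigenvector), so `M - μ` is not surjective on `W`, hence
not injective: `W` contains an eigenvector of `M` for `μ`. The eigenspace being a line, it lies in
`W`, and with it `vR`.
-/

open Module LinearMap Matrix

theorem Submodule.le_of_finrank_eq_one_of_inf_ne_bot {K V : Type*} [DivisionRing K]
    [AddCommGroup V] [Module K V] {E W : Submodule K V} (hE : finrank K E = 1)
    (hEW : E ⊓ W ≠ ⊥) : E ≤ W := by
  have := Module.finite_of_finrank_eq_succ hE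
  have hrank : finrank K E ≤ finrank K ↥(E ⊓ W) := by
    rw [hE, Nat.one_le_iff_ne_zero]
    exact fun h => hEW (Submodule.finrank_eq_zero.mp h)
  exact inf_eq_left.mp (Submodule.eq_of_le_of_finrank_le inf_le_left hrank)

theorem LinearMap.ker_sub_smul_id_inf_ne_bot {K V : Type*} [Field K] [AddCommGroup V]
    [Module K V] {f : Module.End K V} {μ : K} {W : Submodule K V} [FiniteDimensional K W]
    (hW : ∀ x ∈ W, f x ∈ W) {φ : Module.Dual K V} (hφ : ∀ x, φ (f x) = μ * φ x)
    (hφW : ¬ W ≤ ker φ) : ker (f - μ • id) ⊓ W ≠ ⊥ := by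
  set T : Module.End K W := f.restrict hW - μ • id
  have hrange : range T ≠ ⊤ := by
    intro htop
    refine hφW fun w hw => ?_
    obtain ⟨u, hu⟩ := range_eq_top.mp htop ⟨w, hw⟩
    rw [mem_ker, show w = (T u : V) by rw [hu]]
    simp [T, hφ]
  obtain ⟨u, hu, hu0⟩ := Submodule.exists_mem_ne_zero_of_ne_bot
    (mt ker_eq_bot_iff_range_eq_top.mp hrange)
  refine (Submodule.ne_bot_iff _).mpr ⟨u, ⟨?_, u.2⟩, by simpa using hu0⟩
  simpa [T, sub_eq_zero, Subtype.ext_iff] using hu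

theorem Matrix.dotProduct_mulVec_of_transpose_mulVec_eq_smul {n : Type*} [Fintype n]
    {R : Type*} [CommSemiring R] {M : Matrix n n R} {μ : R} {v : n → R}
    (hv : Mᵀ *ᵥ v = μ • v) (x : n → R) : v ⬝ᵥ (M *ᵥ x) = μ * (v ⬝ᵥ x) := by
  rw [dotProduct_mulVec, ← mulVec_transpose, hv, smul_dotProduct, smul_eq_mul]

theorem mainLemma_general {n : ℕ} (M : Matrix (Fin n) (Fin n) ℝ) (μ : ℝ)
    (hgeom : Module.finrank ℝ
      (LinearMap.ker (M.mulVecLin - μ • (LinearMap.id : (Fin n → ℝ) →ₗ[ℝ] (Fin n → ℝ)))) = 1)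
    (vL vR : Fin n → ℝ)
    (hvL : M.transpose.mulVec vL = μ • vL)
    (hvR : M.mulVec vR = μ • vR)
    (W : Submodule ℝ (Fin n → ℝ)) (hW : ∀ x ∈ W, M.mulVec x ∈ W) :
    vR ∈ W ∨ ∀ w ∈ W, ∑ i, vL i * w i = 0 := by
  refine or_iff_not_imp_right.mpr fun hvLW => ?_
  have hφW : ¬ W ≤ ker (dotProductBilin ℝ ℝ vL) := fun h => hvLW fun w hw => h hw
  have hE := Submodule.le_of_finrank_eq_one_of_inf_ne_bot hgeom
    (ker_sub_smul_id_inf_ne_bot hW (dotProduct_mulVec_of_transpose_mulVec_eq_smul hvL) hφW)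
  exact hE (by simpa [sub_eq_zero] using hvR)

/-- Lemma 5.1, the Main Lemma. Let `μ` be a real eigenvalue of `M`
with geometric multiplicity 1, and let `vL`, `vR` be eigenvectors of `Mᵀ` and `M`
(respectively) with eigenvalue `μ`. If `W` is an `M`-invariant subspace, then
`vR ∈ W` or `vL ∈ W^⊥`. -/
theorem mainLemma {n : ℕ} (M : Matrix (Fin n) (Fin n) ℝ) (μ : ℝ)
    (hgeom : Module.finrank ℝ
      (LinearMap.ker (M.mulVecLin - μ • (LinearMap.id : (Fin n → ℝ) →ₗ[ℝ] (Fin n → ℝ)))) = 1)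
    (vL vR : Fin n → ℝ)
    (hvL0 : vL ≠ 0) (hvL : M.transpose.mulVec vL = μ • vL)
    (hvR0 : vR ≠ 0) (hvR : M.mulVec vR = μ • vR)
    (W : Submodule ℝ (Fin n → ℝ)) (hW : ∀ x ∈ W, M.mulVec x ∈ W) :
    vR ∈ W ∨ ∀ w ∈ W, ∑ i, vL i * w i = 0 :=
  mainLemma_general M μ hgeom vL vR hvL hvR W hW
end

section
/- Let n ≥ 1, let A ∈ ℝ^{n×n}, and let λ ∈ ℝ be an eigenvalue of A whose eigenspace is one-dimensional (geometric multiplicity 1). Suppose v_R is an eigenvector of A with eigenvalue λ having all entries strictly positive, and v_L is an eigenvector of Aᵀ with eigenvalue λ having all entries strictly positive. Then every A-invariant synchrony subspace Δ_𝒫 ⊆ ℝ^n contains v_R, and every A-invariant anti-synchrony subspace Δ_𝒫 ⊆ ℝ^n is orthogonal to v_L (i.e., v_L · x = 0 for all x ∈ Δ_𝒫). -/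
/-!
If `vL` is a left eigenvector for `μ`, then `vL ⬝ᵥ (A - μ) y = 0` for every `y`, so on an
`A`-invariant subspace `W` containing some `x` with `vL ⬝ᵥ x ≠ 0` the map `A - μ` is not
surjective, hence not injective: `W` meets the `μ`-eigenspace nontrivially. As that eigenspace
is a line, it lies in `W`, so `vR ∈ W`. A synchrony subspace contains the constant vectors,
which pair positively with `vL`; an anti-synchrony subspace has a pair of coordinates `x_i = -x_j`
and so cannot contain the positive vector `vR`.
-/

open Matrix Module

namespace LinearMap

variable {K V : Type*} [Field K] [AddCommGroup V] [Module K V] [FiniteDimensional K V]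

theorem inf_ker_ne_bot_of_comp_eq_zero {g : V →ₗ[K] V} {φ : V →ₗ[K] K} (hφ : φ ∘ₗ g = 0)
    {W : Submodule K V} (hW : ∀ w ∈ W, g w ∈ W) {x : V} (hx : x ∈ W) (hφx : φ x ≠ 0) :
    W ⊓ ker g ≠ ⊥ := by
  intro hbot
  have hinj : Function.Injective (g.restrict hW) := by
    refine (injective_iff_map_eq_zero _).2 fun w hw => Subtype.ext ?_
    have hw' : (w : V) ∈ W ⊓ ker g := ⟨w.2, congrArg Subtype.val hw⟩
    rwa [hbot, Submodule.mem_bot] at hw'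
  obtain ⟨w, hw⟩ := (injective_iff_surjective.1 hinj) ⟨x, hx⟩
  apply hφx
  rw [show x = g w from (congrArg Subtype.val hw).symm, ← comp_apply, hφ, zero_apply]

theorem ker_le_of_finrank_ker_eq_one {g : V →ₗ[K] V} (hg : finrank K (ker g) = 1)
    {W : Submodule K V} (hWg : W ⊓ ker g ≠ ⊥) : ker g ≤ W := by
  have heq : W ⊓ ker g = ker g :=
    Submodule.eq_of_le_of_finrank_le inf_le_right (hg ▸ Submodule.one_le_finrank_iff.2 hWg)
  exact heq ▸ inf_le_left

end LinearMap

namespace Matrix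

variable {K ι : Type*} [Field K] [Fintype ι]

theorem dotProduct_mulVec_sub_smul_eq_zero {A : Matrix ι ι K} {μ : K} {vL : ι → K}
    (hvL : Aᵀ *ᵥ vL = μ • vL) (y : ι → K) : vL ⬝ᵥ (A *ᵥ y - μ • y) = 0 := by
  rw [dotProduct_sub, dotProduct_mulVec, ← mulVec_transpose, hvL, smul_dotProduct,
    dotProduct_smul, sub_self]

theorem mem_of_mulVec_mem_of_dotProduct_ne_zero {A : Matrix ι ι K} {μ : K}
    (hgeom : finrank K (LinearMap.ker (A.mulVecLin - μ • LinearMap.id)) = 1)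
    {vR vL : ι → K} (hvR : A *ᵥ vR = μ • vR) (hvL : Aᵀ *ᵥ vL = μ • vL)
    {W : Submodule K (ι → K)} (hW : ∀ w ∈ W, A *ᵥ w ∈ W) {x : ι → K} (hx : x ∈ W)
    (hvLx : vL ⬝ᵥ x ≠ 0) : vR ∈ W := by
  have hφ : dotProductBilin K K vL ∘ₗ (A.mulVecLin - μ • LinearMap.id) = 0 :=
    LinearMap.ext (dotProduct_mulVec_sub_smul_eq_zero hvL)
  have hWg : ∀ w ∈ W, (A.mulVecLin - μ • LinearMap.id : (ι → K) →ₗ[K] ι → K) w ∈ W := fun w hw =>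
    W.sub_mem (hW w hw) (W.smul_mem μ hw)
  refine LinearMap.ker_le_of_finrank_ker_eq_one hgeom
    (LinearMap.inf_ker_ne_bot_of_comp_eq_zero hφ hWg hx hvLx) ?_
  simp [hvR]

end Matrix

namespace TaggedPartition

variable {n : ℕ} (tp : TaggedPartition n)

def polydiagSubmodule : Submodule ℝ (Fin n → ℝ) where
  carrier := tp.polydiag
  zero_mem' := ⟨fun _ _ _ _ _ _ => rfl, fun _ _ _ _ _ _ _ => neg_zero.symm⟩
  add_mem' ha hb :=
    ⟨fun P hP i hi j hj => by simp only [Pi.add_apply, ha.1 P hP i hi j hj, hb.1 P hP i hi j hj],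
     fun P Q h i hi j hj => by
       simp only [Pi.add_apply, ha.2 P Q h i hi j hj, hb.2 P Q h i hi j hj, neg_add]⟩
  smul_mem' c x hx :=
    ⟨fun P hP i hi j hj => by simp only [Pi.smul_apply, hx.1 P hP i hi j hj],
     fun P Q h i hi j hj => by simp only [Pi.smul_apply, hx.2 P Q h i hi j hj, smul_neg]⟩

theorem const_mem_polydiag (hsync : tp.IsSynchrony) (c : ℝ) : (fun _ => c) ∈ tp.polydiag :=
  ⟨fun _ _ _ _ _ _ => rfl, fun P Q h => absurd h (by simp [hsync P])⟩

theorem notMem_polydiag_of_pos (hanti : ¬ tp.IsSynchrony) {v : Fin n → ℝ} (hv : ∀ i, 0 < v i) :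
    v ∉ tp.polydiag := by
  intro hmem
  obtain ⟨P, hP⟩ := not_forall.1 hanti
  obtain ⟨Q, hPQ⟩ := Option.ne_none_iff_exists'.1 hP
  obtain ⟨i, hi⟩ := tp.classes_nonempty P (tp.star_dom P hP)
  obtain ⟨j, hj⟩ := tp.classes_nonempty Q (tp.star_ran P Q hPQ)
  linarith [hmem.2 P Q hPQ i hi j hj, hv i, hv j]

end TaggedPartition

/-- Remark 5.5, Frobenius–Perron consequence. Suppose `μ` is an
eigenvalue of `A` with geometric multiplicity 1, with strictly positive right and left
eigenvectors `vR` (of `A`) and `vL` (of `Aᵀ`). Then every `A`-invariant synchrony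
subspace contains `vR`, and every `A`-invariant anti-synchrony subspace is orthogonal
to `vL`. -/
theorem perron_synchrony_antisynchrony {n : ℕ} (hn : 1 ≤ n)
    (A : Matrix (Fin n) (Fin n) ℝ) (μ : ℝ)
    (hgeom : Module.finrank ℝ
      (LinearMap.ker (A.mulVecLin - μ • (LinearMap.id : (Fin n → ℝ) →ₗ[ℝ] (Fin n → ℝ)))) = 1)
    (vR vL : Fin n → ℝ)
    (hvRpos : ∀ i, 0 < vR i) (hvR : A.mulVec vR = μ • vR)
    (hvLpos : ∀ i, 0 < vL i) (hvL : A.transpose.mulVec vL = μ • vL)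
    (tp : TaggedPartition n) (hinv : ∀ x ∈ tp.polydiag, A.mulVec x ∈ tp.polydiag) :
    (tp.IsSynchrony → vR ∈ tp.polydiag) ∧
    (¬ tp.IsSynchrony → ∀ x ∈ tp.polydiag, ∑ i, vL i * x i = 0) := by
  have hmem : ∀ x ∈ tp.polydiag, vL ⬝ᵥ x ≠ 0 → vR ∈ tp.polydiag := fun _ hx =>
    A.mem_of_mulVec_mem_of_dotProduct_ne_zero hgeom hvR hvL (W := tp.polydiagSubmodule) hinv hx
  refine ⟨fun hsync => hmem _ (tp.const_mem_polydiag hsync 1) ?_, fun hanti x hx => ?_⟩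
  · have hvL1 : 0 < vL ⬝ᵥ fun _ => 1 :=
      Finset.sum_pos (fun i _ => by simpa using hvLpos i) ⟨⟨0, hn⟩, Finset.mem_univ _⟩
    exact hvL1.ne'
  · by_contra hvLx
    exact tp.notMem_polydiag_of_pos hanti hvRpos (hmem x hx hvLx)
end

section
/- Let M ∈ ℝ^{n×n} have all column sums equal to λ ∈ ℝ (so ∑_{i} M_{ij} = λ for every j, and 𝟙 = (1,…,1) is an eigenvector of Mᵀ with eigenvalue λ). Assume the eigenspace of M for the eigenvalue λ is one-dimensional, and let v be an eigenvector of M with eigenvalue λ. Then every M-invariant subspace W ⊆ ℝ^n satisfies v ∈ W or 𝟙 ∈ W^⊥. -/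
/-! If `𝟙 ⊥ W` fails, some `w ∈ W` has nonzero coordinate sum. Since the columns of `M - μ`
sum to zero, the range of `M - μ` lies in `𝟙^⊥`, so `w` is not in it and `M - μ` restricted
to the finite-dimensional invariant subspace `W` is not surjective, hence not injective. Thus
`W` meets the eigenspace `ker (M - μ)` nontrivially, and a line meeting `W` nontrivially lies
in `W`; in particular `v ∈ W`. -/

theorem Matrix.sum_mulVec_of_forall_sum_col_eq {m n R : Type*} [Fintype m] [Fintype n]
    [Semiring R] {M : Matrix m n R} {μ : R} (hcol : ∀ j, ∑ i, M i j = μ) (x : n → R) :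
    ∑ i, M.mulVec x i = μ * ∑ j, x j := by
  simp only [Matrix.mulVec, dotProduct]
  rw [Finset.sum_comm, Finset.mul_sum]
  exact Finset.sum_congr rfl fun j _ => by rw [← Finset.sum_mul, hcol]

theorem LinearMap.le_range_of_disjoint_ker {K V : Type*} [DivisionRing K] [AddCommGroup V]
    [Module K V] {f : V →ₗ[K] V} {W : Submodule K V} [FiniteDimensional K W]
    (hW : ∀ x ∈ W, f x ∈ W) (h : Disjoint (LinearMap.ker f) W) : W ≤ LinearMap.range f := by
  have hinj : Function.Injective (f.restrict hW) := by
    rw [← LinearMap.ker_eq_bot, eq_bot_iff]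
    intro x hx
    have hx0 : (x : V) = 0 :=
      Submodule.disjoint_def.mp h x (congrArg Subtype.val hx) x.2
    exact (Submodule.mem_bot K).mpr (Subtype.ext hx0)
  intro w hw
  obtain ⟨x, hx⟩ := LinearMap.injective_iff_surjective.mp hinj ⟨w, hw⟩
  exact ⟨x, congrArg Subtype.val hx⟩

theorem corOfMain_general {n : ℕ} (M : Matrix (Fin n) (Fin n) ℝ) (μ : ℝ)
    (hcol : ∀ j, ∑ i, M i j = μ)
    (hgeom : Module.finrank ℝ
      (LinearMap.ker (M.mulVecLin - μ • (LinearMap.id : (Fin n → ℝ) →ₗ[ℝ] (Fin n → ℝ)))) = 1)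
    (v : Fin n → ℝ) (hv : M.mulVec v = μ • v)
    (W : Submodule ℝ (Fin n → ℝ)) (hW : ∀ x ∈ W, M.mulVec x ∈ W) :
    v ∈ W ∨ ∀ w ∈ W, ∑ i, w i = 0 := by
  set L := M.mulVecLin - μ • (LinearMap.id : (Fin n → ℝ) →ₗ[ℝ] (Fin n → ℝ))
  have hLW : ∀ x ∈ W, L x ∈ W := fun x hx => W.sub_mem (hW x hx) (W.smul_mem μ hx)
  have hsum_L : ∀ x, ∑ i, L x i = 0 := fun x => by
    simp only [L, LinearMap.sub_apply, LinearMap.smul_apply, LinearMap.id_apply,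
      Matrix.mulVecLin_apply, Pi.sub_apply, Pi.smul_apply, smul_eq_mul, Finset.sum_sub_distrib]
    rw [Matrix.sum_mulVec_of_forall_sum_col_eq hcol, Finset.mul_sum, sub_self]
  by_cases hW_sum : ∀ w ∈ W, ∑ i, w i = 0
  · exact Or.inr hW_sum
  left
  have hW_range : ¬ W ≤ LinearMap.range L := by
    push Not at hW_sum
    obtain ⟨w, hw, hw_sum⟩ := hW_sum
    intro h
    obtain ⟨x, rfl⟩ := h hw
    exact hw_sum (hsum_L x)
  have hker : LinearMap.ker L ≤ W :=
    (Submodule.isAtom_iff_finrank_eq_one.mpr hgeom).not_disjoint_iff_le.mp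
      fun h => hW_range (LinearMap.le_range_of_disjoint_ker hLW h)
  exact hker (by simp [L, hv])

/-- Corollary 6.1. Let `M` have all column sums equal to `μ`
(so the all-ones vector is an eigenvector of `Mᵀ` with eigenvalue `μ`). If the
eigenspace of `M` for `μ` is one-dimensional and `v` is an eigenvector of `M` with
eigenvalue `μ`, then every `M`-invariant subspace `W` satisfies `v ∈ W` or `𝟙 ∈ W^⊥`. -/
theorem corOfMain {n : ℕ} (M : Matrix (Fin n) (Fin n) ℝ) (μ : ℝ)
    (hcol : ∀ j, ∑ i, M i j = μ)
    (hgeom : Module.finrank ℝ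
      (LinearMap.ker (M.mulVecLin - μ • (LinearMap.id : (Fin n → ℝ) →ₗ[ℝ] (Fin n → ℝ)))) = 1)
    (v : Fin n → ℝ) (hv0 : v ≠ 0) (hv : M.mulVec v = μ • v)
    (W : Submodule ℝ (Fin n → ℝ)) (hW : ∀ x ∈ W, M.mulVec x ∈ W) :
    v ∈ W ∨ ∀ w ∈ W, ∑ i, w i = 0 :=
  corOfMain_general M μ hcol hgeom v hv W hW
end

section
/- Let n ≥ 1 and let A ∈ ℝ^{n×n} have nonnegative off-diagonal entries (A_{ij} ≥ 0 for all i ≠ j). Assume A is irreducible, i.e., for all vertices i ≠ j there exist i = i_0, i_1, …, i_m = j with A_{i_{t+1} i_t} ≠ 0 and i_{t+1} ≠ i_t for each t. Let L be the Laplacian matrix of A. Then the kernel of L is exactly the span of the all-ones vector 𝟙 = (1,…,1); in particular the eigenvalue 0 of L has geometric multiplicity 1. -/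
/-!
If `L x = 0`, look at a vertex where `x` is maximal. The equation `∑ⱼ A_{rj} (x_r - x_j) = 0` at a
maximiser `r` is a sum of nonnegative terms, so `x_j = x_r` whenever `A_{rj} ≠ 0`: the maximum
spreads along every edge. Irreducibility gives a path from any vertex into the maximiser, and
running the spreading argument backwards along it shows that `x` is constant.
-/

/-- The Laplacian matrix of a weighted adjacency matrix `A`:
`L_{ij} = (∑_k A_{ik}) δ_{ij} − A_{ij}`. -/
def lap {n : ℕ} (A : Matrix (Fin n) (Fin n) ℝ) : Matrix (Fin n) (Fin n) ℝ :=
  Matrix.of fun i j => (if i = j then ∑ k, A i k else 0) - A i j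

open Finset Matrix

theorem eq_of_sum_mul_sub_eq_zero_of_forall_le {ι : Type*} [Fintype ι] {A : Matrix ι ι ℝ}
    {x : ι → ℝ} {r j : ι} (hnn : ∀ i j, i ≠ j → 0 ≤ A i j) (hmax : ∀ k, x k ≤ x r)
    (hsum : ∑ k, A r k * (x r - x k) = 0) (hA : A r j ≠ 0) : x j = x r := by
  have hterm : ∀ k ∈ univ, 0 ≤ A r k * (x r - x k) := by
    intro k _
    rcases eq_or_ne r k with rfl | hk
    · simp
    · exact mul_nonneg (hnn r k hk) (sub_nonneg.mpr (hmax k))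
  have hj := (sum_eq_zero_iff_of_nonneg hterm).mp hsum j (mem_univ j)
  linarith [(mul_eq_zero.mp hj).resolve_left hA]

variable {n : ℕ} {A : Matrix (Fin n) (Fin n) ℝ}

theorem lap_mulVec_apply (x : Fin n → ℝ) (r : Fin n) :
    (lap A *ᵥ x) r = ∑ j, A r j * (x r - x j) := by
  simp only [mulVec, dotProduct, lap, of_apply, sub_mul, mul_sub, ite_mul, zero_mul,
    sum_sub_distrib, sum_ite_eq, mem_univ, if_true, ← sum_mul]

theorem lap_mulVec_const (a : ℝ) : lap A *ᵥ (fun _ => a) = 0 := by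
  funext r
  simp [lap_mulVec_apply]

theorem eq_of_lap_mulVec_eq_zero (hnn : ∀ i j, i ≠ j → 0 ≤ A i j)
    (hirr : ∀ i j : Fin n, i ≠ j → ∃ m : ℕ, ∃ c : ℕ → Fin n, c 0 = i ∧ c m = j ∧
      ∀ t < m, A (c (t + 1)) (c t) ≠ 0 ∧ c (t + 1) ≠ c t)
    {x : Fin n → ℝ} (hx : lap A *ᵥ x = 0) (i j : Fin n) : x i = x j := by
  obtain ⟨r, -, hmax⟩ := exists_max_image univ x ⟨i, mem_univ i⟩
  suffices hconst : ∀ k, x k = x r from (hconst i).trans (hconst j).symm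
  intro k
  rcases eq_or_ne k r with rfl | hk
  · rfl
  obtain ⟨m, c, rfl, hcm, hpath⟩ := hirr k r hk
  refine Nat.decreasingInduction (motive := fun t _ => x (c t) = x r)
    (fun t ht hsucc => ?_) (hcm ▸ rfl) (Nat.zero_le m)
  have hmax' : ∀ k, x k ≤ x (c (t + 1)) := fun k => hsucc ▸ hmax k (mem_univ k)
  have hsum := (lap_mulVec_apply x (c (t + 1))).symm.trans (congrFun hx _)
  exact (eq_of_sum_mul_sub_eq_zero_of_forall_le hnn hmax' hsum (hpath t ht).1).trans hsucc

/-- Remark 6.8. If `A` has nonnegative off-diagonal entries and is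
irreducible (in the directed-path sense), then the kernel of the Laplacian `L` of `A`
is exactly the span of the all-ones vector; in particular the eigenvalue `0` of `L`
has geometric multiplicity 1. -/
theorem ker_lap_eq_span_ones {n : ℕ} (hn : 1 ≤ n) (A : Matrix (Fin n) (Fin n) ℝ)
    (hnn : ∀ i j, i ≠ j → 0 ≤ A i j)
    (hirr : ∀ i j : Fin n, i ≠ j → ∃ m : ℕ, ∃ c : ℕ → Fin n, c 0 = i ∧ c m = j ∧
      ∀ t < m, A (c (t + 1)) (c t) ≠ 0 ∧ c (t + 1) ≠ c t) :
    LinearMap.ker (lap A).mulVecLin = Submodule.span ℝ {fun _ => (1 : ℝ)} ∧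
    Module.finrank ℝ (LinearMap.ker (lap A).mulVecLin) = 1 := by
  have i₀ : Fin n := ⟨0, hn⟩
  have hker : LinearMap.ker (lap A).mulVecLin = Submodule.span ℝ {fun _ => (1 : ℝ)} := by
    refine le_antisymm (fun x hx => ?_) ?_
    · have hconst := eq_of_lap_mulVec_eq_zero hnn hirr (LinearMap.mem_ker.mp hx)
      refine Submodule.mem_span_singleton.mpr ⟨x i₀, funext fun j => ?_⟩
      simpa using hconst i₀ j
    · rw [Submodule.span_le, Set.singleton_subset_iff]
      exact LinearMap.mem_ker.mpr (lap_mulVec_const 1)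
  refine ⟨hker, hker ▸ finrank_span_singleton fun h => ?_⟩
  simpa using congrFun h i₀
end

section
/- For every n ≥ 0 there is a bijection between the set of tagged partitions of {1,…,n} and the set of B-type partitions of {−n,…,n}; in particular these two sets have the same cardinality. -/
/-- A B-type partition of `{−n,…,n} ⊆ ℤ`: a partition into nonempty classes such that
the negative `-Q` of every class `Q` is a class, and there is precisely one class `Q₀`
with `Q₀ = -Q₀`. -/
structure BTypePartition (n : ℕ) where
  classes : Set (Set ℤ)
  subset_Icc : ∀ Q ∈ classes, Q ⊆ Set.Icc (-(n : ℤ)) (n : ℤ)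
  classes_nonempty : ∀ Q ∈ classes, Q.Nonempty
  cover : ∀ m : ℤ, -(n : ℤ) ≤ m → m ≤ (n : ℤ) → ∃ Q ∈ classes, m ∈ Q
  eq_of_inter : ∀ P ∈ classes, ∀ Q ∈ classes, (P ∩ Q).Nonempty → P = Q
  neg_mem : ∀ Q ∈ classes, -Q ∈ classes
  existsUnique_fixed : ∃! Q, Q ∈ classes ∧ -Q = Q


/-!
A class `Q` of a B-type partition is recorded by its positive trace `Q ∩ {1,…,n}` and its
negative trace `(-Q) ∩ {1,…,n}`; the class `-Q` swaps the two, and `0 ∈ Q` exactly for the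
self-negative class. The nonempty positive traces partition `{1,…,n}`, and sending the positive
trace of `Q` to its negative trace (when nonempty) is a partial involution whose only possible
fixed point is the trace of the self-negative class. Conversely a class `P` of a tagged partition
yields the classes `P ∪ -P*` (or `P` and `-P` if `P*` is undefined), and the fixed point `P₀`
yields the self-negative class `{0} ∪ P₀ ∪ -P₀` (which is `{0}` if there is no fixed point).
-/

section

open Set

variable {n : ℕ}

def Fin.toPosInt (i : Fin n) : ℤ := i + 1

lemma Fin.toPosInt_injective : Function.Injective (Fin.toPosInt (n := n)) := by
  intro i j h
  simpa [Fin.toPosInt, Fin.ext_iff] using h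

lemma Fin.toPosInt_mem_Icc (i : Fin n) : i.toPosInt ∈ Icc (1 : ℤ) n := by
  have := i.isLt
  simp only [Fin.toPosInt, mem_Icc]
  omega

lemma Fin.toPosInt_pos (i : Fin n) : 0 < i.toPosInt := by
  simp only [Fin.toPosInt]
  omega

lemma Fin.exists_toPosInt_eq {m : ℤ} (h₀ : 0 < m) (hn : m ≤ n) : ∃ i : Fin n, i.toPosInt = m :=
  ⟨⟨(m - 1).toNat, by omega⟩, by simp only [Fin.toPosInt]; omega⟩

lemma Fin.eq_zero_or_exists_toPosInt {m : ℤ} (hm : m ∈ Icc (-(n : ℤ)) n) :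
    m = 0 ∨ ∃ i : Fin n, i.toPosInt = m ∨ -i.toPosInt = m := by
  obtain ⟨h₁, h₂⟩ := hm
  rcases lt_trichotomy m 0 with h | h | h
  · obtain ⟨i, hi⟩ := Fin.exists_toPosInt_eq (n := n) (neg_pos.2 h) (by omega)
    exact Or.inr ⟨i, Or.inr (by rw [hi, neg_neg])⟩
  · exact Or.inl h
  · obtain ⟨i, hi⟩ := Fin.exists_toPosInt_eq (n := n) h h₂
    exact Or.inr ⟨i, Or.inl hi⟩

def posTrace (n : ℕ) (Q : Set ℤ) : Set (Fin n) := Fin.toPosInt ⁻¹' Q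

@[simp]
lemma mem_posTrace {Q : Set ℤ} {i : Fin n} : i ∈ posTrace n Q ↔ i.toPosInt ∈ Q := Iff.rfl

def signedSet (A B : Set (Fin n)) : Set ℤ := Fin.toPosInt '' A ∪ -(Fin.toPosInt '' B)

lemma mem_signedSet {A B : Set (Fin n)} {m : ℤ} :
    m ∈ signedSet A B ↔ (∃ i ∈ A, i.toPosInt = m) ∨ ∃ i ∈ B, -i.toPosInt = m := by
  simp only [signedSet, mem_union, mem_image, mem_neg, neg_eq_iff_eq_neg]

lemma neg_signedSet (A B : Set (Fin n)) : -signedSet A B = signedSet B A := by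
  rw [signedSet, signedSet, union_neg, neg_neg, union_comm]

lemma posTrace_signedSet (A B : Set (Fin n)) : posTrace n (signedSet A B) = A := by
  ext i
  simp only [mem_posTrace, mem_signedSet, Fin.toPosInt_injective.eq_iff, exists_eq_right,
    or_iff_left_iff_imp]
  rintro ⟨j, -, h⟩
  have := (Fin.toPosInt_mem_Icc i).1
  have := (Fin.toPosInt_mem_Icc j).1
  omega

lemma zero_notMem_signedSet (A B : Set (Fin n)) : (0 : ℤ) ∉ signedSet A B := by
  rw [mem_signedSet]
  rintro (⟨i, -, h⟩ | ⟨i, -, h⟩) <;>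
  · have := (Fin.toPosInt_mem_Icc i).1
    omega

lemma posTrace_insert_zero (S : Set ℤ) : posTrace n (insert 0 S) = posTrace n S := by
  ext i
  have := (Fin.toPosInt_mem_Icc i).1
  simp only [mem_posTrace, mem_insert_iff, or_iff_right_iff_imp]
  omega

lemma signedSet_subset_Icc (A B : Set (Fin n)) : signedSet A B ⊆ Icc (-(n : ℤ)) n := by
  intro m hm
  rcases mem_signedSet.1 hm with ⟨i, -, rfl⟩ | ⟨i, -, rfl⟩ <;>
  · have := Fin.toPosInt_mem_Icc i
    simp only [mem_Icc] at this ⊢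
    omega

lemma diff_zero_eq_signedSet {Q : Set ℤ} (hQ : Q ⊆ Icc (-(n : ℤ)) n) :
    Q \ {0} = signedSet (posTrace n Q) (posTrace n (-Q)) := by
  ext m
  refine ⟨fun ⟨hm, hm₀⟩ => ?_, fun h => ⟨?_, fun h₀ => zero_notMem_signedSet _ _ (h₀ ▸ h)⟩⟩
  · rcases Fin.eq_zero_or_exists_toPosInt (hQ hm) with rfl | ⟨i, rfl | rfl⟩
    · exact absurd rfl hm₀
    · exact mem_signedSet.2 (Or.inl ⟨i, hm, rfl⟩)
    · exact mem_signedSet.2 (Or.inr ⟨i, by rwa [mem_posTrace, mem_neg], rfl⟩)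
  · rcases mem_signedSet.1 h with ⟨i, hi, rfl⟩ | ⟨i, hi, rfl⟩
    · exact hi
    · rwa [mem_posTrace, mem_neg] at hi

namespace TaggedPartition

variable (tp : TaggedPartition n)

def partner (P : Set (Fin n)) : Set (Fin n) := (tp.star P).getD ∅

open Classical in
lemma star_eq_ite_partner (P : Set (Fin n)) :
    tp.star P = if (tp.partner P).Nonempty then some (tp.partner P) else none := by
  cases h : tp.star P with
  | none => simp [partner, h]
  | some Q => simp [partner, h, tp.classes_nonempty Q (tp.star_ran P Q h)]

lemma ext_of_partner {tp' : TaggedPartition n} (hc : tp.classes = tp'.classes)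
    (hp : ∀ P, tp.partner P = tp'.partner P) : tp = tp' := by
  have hs : tp.star = tp'.star := funext fun P => by
    rw [star_eq_ite_partner, hp, star_eq_ite_partner]
  cases tp
  cases tp'
  cases hc
  cases hs
  rfl

lemma partner_eq_self_iff {P : Set (Fin n)} (hP : P ∈ tp.classes) :
    tp.partner P = P ↔ tp.star P = some P := by
  refine ⟨fun h => ?_, fun h => by simp [partner, h]⟩
  rw [tp.star_eq_ite_partner, h, if_pos (tp.classes_nonempty P hP)]

lemma partner_eq_of_star_eq_some {P Q : Set (Fin n)} (h : tp.star P = some Q) :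
    tp.partner P = Q := by
  simp [partner, h]

/-- The fixed point of `*` if there is one, `∅` otherwise. -/
def fixedClass : Set (Fin n) := ⋃₀ {P | tp.star P = some P}

lemma fixedClass_eq {P : Set (Fin n)} (h : tp.star P = some P) : tp.fixedClass = P := by
  refine subset_antisymm (sUnion_subset fun P' h' => ?_) (subset_sUnion_of_mem h)
  rw [tp.star_fixed P' P h' h]

def zeroBlock : Set ℤ := insert 0 (signedSet tp.fixedClass tp.fixedClass)

lemma neg_zeroBlock : -tp.zeroBlock = tp.zeroBlock := by
  rw [zeroBlock, neg_insert, neg_zero, neg_signedSet]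

/-- The class of the B-type partition containing the positive copy of `P`. -/
def block (P : Set (Fin n)) : Set ℤ :=
  if tp.star P = some P then tp.zeroBlock else signedSet P (tp.partner P)

lemma block_of_star_eq {P : Set (Fin n)} (h : tp.star P = some P) : tp.block P = tp.zeroBlock :=
  if_pos h

lemma block_of_star_ne {P : Set (Fin n)} (h : tp.star P ≠ some P) :
    tp.block P = signedSet P (tp.partner P) :=
  if_neg h

lemma zeroBlock_subset_Icc : tp.zeroBlock ⊆ Icc (-(n : ℤ)) n :=
  insert_subset (by simp) (signedSet_subset_Icc _ _)

lemma block_subset_Icc (P : Set (Fin n)) : tp.block P ⊆ Icc (-(n : ℤ)) n := by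
  unfold block
  split_ifs
  · exact tp.zeroBlock_subset_Icc
  · exact signedSet_subset_Icc _ _

lemma posTrace_block (P : Set (Fin n)) : posTrace n (tp.block P) = P := by
  unfold block zeroBlock
  split_ifs with h
  · rw [posTrace_insert_zero, posTrace_signedSet, tp.fixedClass_eq h]
  · exact posTrace_signedSet _ _

lemma posTrace_neg_block {P : Set (Fin n)} (hP : P ∈ tp.classes) :
    posTrace n (-tp.block P) = tp.partner P := by
  by_cases h : tp.star P = some P
  · have hb := tp.block_of_star_eq h
    rw [hb, neg_zeroBlock, ← hb, tp.posTrace_block P, (tp.partner_eq_self_iff hP).2 h]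
  · rw [tp.block_of_star_ne h, neg_signedSet, posTrace_signedSet]

lemma toPosInt_mem_block {P : Set (Fin n)} {i : Fin n} (hi : i ∈ P) : i.toPosInt ∈ tp.block P := by
  unfold block zeroBlock
  split_ifs with h
  · exact mem_insert_of_mem _ (mem_signedSet.2 (Or.inl ⟨i, tp.fixedClass_eq h ▸ hi, rfl⟩))
  · exact mem_signedSet.2 (Or.inl ⟨i, hi, rfl⟩)

lemma neg_block_ne {P : Set (Fin n)} (hP : P ∈ tp.classes) (h : tp.star P ≠ some P) :
    -tp.block P ≠ tp.block P := fun h' =>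
  h <| (tp.partner_eq_self_iff hP).1 <| by rw [← tp.posTrace_neg_block hP, h', tp.posTrace_block P]

def classOf (m : ℤ) : Set (Fin n) := ⋃₀ {P ∈ tp.classes | m ∈ Fin.toPosInt '' P}

lemma classOf_toPosInt {P : Set (Fin n)} (hP : P ∈ tp.classes) {i : Fin n} (hi : i ∈ P) :
    tp.classOf i.toPosInt = P := by
  refine subset_antisymm (sUnion_subset fun P' ⟨hP', hiP'⟩ => ?_)
    (subset_sUnion_of_mem ⟨hP, mem_image_of_mem _ hi⟩)
  rw [Fin.toPosInt_injective.mem_set_image] at hiP'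
  rw [tp.eq_of_inter P' hP' P hP ⟨i, hiP', hi⟩]

/-- The class of the B-type partition containing `m ∈ {-n,…,n}`. -/
def blockAt (m : ℤ) : Set ℤ :=
  if 0 < m then tp.block (tp.classOf m)
  else if m < 0 then -tp.block (tp.classOf (-m)) else tp.zeroBlock

lemma blockAt_zero : tp.blockAt 0 = tp.zeroBlock := rfl

lemma blockAt_neg (m : ℤ) : tp.blockAt (-m) = -tp.blockAt m := by
  unfold blockAt
  rcases lt_trichotomy m 0 with h | rfl | h
  · simp [h, h.not_gt]
  · simp [neg_zeroBlock]
  · simp [h, h.not_gt]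

lemma blockAt_toPosInt {P : Set (Fin n)} (hP : P ∈ tp.classes) {i : Fin n} (hi : i ∈ P) :
    tp.blockAt i.toPosInt = tp.block P := by
  rw [blockAt, if_pos i.toPosInt_pos, tp.classOf_toPosInt hP hi]

lemma blockAt_neg_toPosInt {P : Set (Fin n)} (hP : P ∈ tp.classes) {i : Fin n} (hi : i ∈ P) :
    tp.blockAt (-i.toPosInt) = -tp.block P := by
  rw [tp.blockAt_neg, tp.blockAt_toPosInt hP hi]

lemma blockAt_cases {m : ℤ} (hm : m ∈ Icc (-(n : ℤ)) n) :
    m = 0 ∨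
      ∃ P ∈ tp.classes, ∃ i ∈ P, m = i.toPosInt ∧ tp.blockAt m = tp.block P ∨
        m = -i.toPosInt ∧ tp.blockAt m = -tp.block P := by
  rcases Fin.eq_zero_or_exists_toPosInt hm with rfl | ⟨i, rfl | rfl⟩
  · exact Or.inl rfl
  all_goals obtain ⟨P, hP, hi⟩ := tp.cover i
  · exact Or.inr ⟨P, hP, i, hi, Or.inl ⟨rfl, tp.blockAt_toPosInt hP hi⟩⟩
  · exact Or.inr ⟨P, hP, i, hi, Or.inr ⟨rfl, tp.blockAt_neg_toPosInt hP hi⟩⟩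

lemma mem_blockAt_self {m : ℤ} (hm : m ∈ Icc (-(n : ℤ)) n) : m ∈ tp.blockAt m := by
  rcases tp.blockAt_cases hm with rfl | ⟨P, -, i, hi, ⟨rfl, h⟩ | ⟨rfl, h⟩⟩
  · exact mem_insert _ _
  all_goals rw [h]
  · exact tp.toPosInt_mem_block hi
  · exact neg_mem_neg.2 (tp.toPosInt_mem_block hi)

lemma blockAt_subset_Icc {m : ℤ} (hm : m ∈ Icc (-(n : ℤ)) n) :
    tp.blockAt m ⊆ Icc (-(n : ℤ)) n := by
  rcases tp.blockAt_cases hm with rfl | ⟨P, -, -, -, ⟨-, h⟩ | ⟨-, h⟩⟩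
  · exact tp.zeroBlock_subset_Icc
  · exact h ▸ tp.block_subset_Icc P
  · rw [h, neg_subset, neg_Icc, neg_neg]
    exact tp.block_subset_Icc P

lemma blockAt_eq_of_mem_zeroBlock {m : ℤ} (h : m ∈ tp.zeroBlock) : tp.blockAt m = tp.zeroBlock := by
  rcases h with rfl | h
  · exact tp.blockAt_zero
  rcases mem_signedSet.1 h with ⟨i, hi, rfl⟩ | ⟨i, hi, rfl⟩ <;>
  · obtain ⟨P, hfix, hiP⟩ := mem_sUnion.1 hi
    have hfix : tp.star P = some P := hfix
    have hP := tp.star_dom P (by simp [hfix])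
    simp only [tp.blockAt_toPosInt hP hiP, tp.blockAt_neg_toPosInt hP hiP, tp.block_of_star_eq hfix,
      neg_zeroBlock]

lemma blockAt_eq_of_mem_block {P : Set (Fin n)} (hP : P ∈ tp.classes) {m : ℤ}
    (h : m ∈ tp.block P) : tp.blockAt m = tp.block P := by
  by_cases hfix : tp.star P = some P
  · rw [tp.block_of_star_eq hfix] at h ⊢
    exact tp.blockAt_eq_of_mem_zeroBlock h
  rw [tp.block_of_star_ne hfix] at h
  rcases mem_signedSet.1 h with ⟨i, hi, rfl⟩ | ⟨i, hi, rfl⟩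
  · exact tp.blockAt_toPosInt hP hi
  cases hQ : tp.star P with
  | none => simp [partner, hQ] at hi
  | some Q =>
    have hPQ : P ≠ Q := fun h => hfix (h ▸ hQ)
    have hQP := tp.star_invol P Q hQ
    rw [tp.partner_eq_of_star_eq_some hQ] at hi
    rw [tp.blockAt_neg_toPosInt (tp.star_ran P Q hQ) hi,
      tp.block_of_star_ne (fun h => hPQ (Option.some_injective _ (hQP.symm.trans h))),
      tp.block_of_star_ne hfix, tp.partner_eq_of_star_eq_some hQP,
      tp.partner_eq_of_star_eq_some hQ, neg_signedSet]

lemma blockAt_eq_of_mem {m m' : ℤ} (hm : m ∈ Icc (-(n : ℤ)) n) (h : m' ∈ tp.blockAt m) :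
    tp.blockAt m' = tp.blockAt m := by
  rcases tp.blockAt_cases hm with rfl | ⟨P, hP, -, -, ⟨-, hb⟩ | ⟨-, hb⟩⟩
  · exact tp.blockAt_eq_of_mem_zeroBlock h
  all_goals rw [hb] at h ⊢
  · exact tp.blockAt_eq_of_mem_block hP h
  · rw [← neg_neg m', tp.blockAt_neg, tp.blockAt_eq_of_mem_block hP h]

lemma blockAt_eq_zeroBlock_of_neg_eq {m : ℤ} (hm : m ∈ Icc (-(n : ℤ)) n)
    (h : -tp.blockAt m = tp.blockAt m) : tp.blockAt m = tp.zeroBlock := by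
  rcases tp.blockAt_cases hm with rfl | ⟨P, hP, -, -, ⟨-, hb⟩ | ⟨-, hb⟩⟩
  · rfl
  all_goals
    by_cases hfix : tp.star P = some P
    · simp only [hb, tp.block_of_star_eq hfix, neg_zeroBlock]
    · exact absurd (by simpa [hb, eq_comm] using h) (tp.neg_block_ne hP hfix)

def toBType : BTypePartition n where
  classes := tp.blockAt '' Icc (-(n : ℤ)) n
  subset_Icc := by
    rintro _ ⟨m, hm, rfl⟩
    exact tp.blockAt_subset_Icc hm
  classes_nonempty := by
    rintro _ ⟨m, hm, rfl⟩
    exact ⟨m, tp.mem_blockAt_self hm⟩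
  cover m h₁ h₂ := ⟨_, mem_image_of_mem _ ⟨h₁, h₂⟩, tp.mem_blockAt_self ⟨h₁, h₂⟩⟩
  eq_of_inter := by
    rintro _ ⟨m, hm, rfl⟩ _ ⟨m', hm', rfl⟩ ⟨k, hk, hk'⟩
    rw [← tp.blockAt_eq_of_mem hm hk, tp.blockAt_eq_of_mem hm' hk']
  neg_mem := by
    rintro _ ⟨m, hm, rfl⟩
    exact ⟨-m, by simpa [and_comm, neg_le] using hm, tp.blockAt_neg m⟩
  existsUnique_fixed := by
    refine ⟨tp.zeroBlock, ⟨⟨0, by simp, tp.blockAt_zero⟩, tp.neg_zeroBlock⟩, ?_⟩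
    rintro _ ⟨⟨m, hm, rfl⟩, h⟩
    exact tp.blockAt_eq_zeroBlock_of_neg_eq hm h

end TaggedPartition

namespace BTypePartition

variable (bt : BTypePartition n)

lemma ext_of_classes {bt' : BTypePartition n} (h : bt.classes = bt'.classes) : bt = bt' := by
  cases bt
  cases bt'
  cases h
  rfl

lemma eq_of_posTrace_eq {Q Q' : Set ℤ} (hQ : Q ∈ bt.classes) (hQ' : Q' ∈ bt.classes)
    (h : posTrace n Q = posTrace n Q') (hne : (posTrace n Q).Nonempty) : Q = Q' := by
  obtain ⟨i, hi⟩ := hne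
  exact bt.eq_of_inter Q hQ Q' hQ' ⟨i.toPosInt, hi, show i ∈ posTrace n Q' from h ▸ hi⟩

lemma neg_eq_of_zero_mem {Q : Set ℤ} (hQ : Q ∈ bt.classes) (h : (0 : ℤ) ∈ Q) : -Q = Q :=
  bt.eq_of_inter _ (bt.neg_mem Q hQ) Q hQ ⟨0, by simpa using h, h⟩

lemma eq_of_neg_eq {Q Q' : Set ℤ} (hQ : Q ∈ bt.classes) (hQ' : Q' ∈ bt.classes)
    (h : -Q = Q) (h' : -Q' = Q') : Q = Q' :=
  bt.existsUnique_fixed.unique ⟨hQ, h⟩ ⟨hQ', h'⟩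

def traceClasses : Set (Set (Fin n)) :=
  {P | P.Nonempty ∧ ∃ Q ∈ bt.classes, posTrace n Q = P}

/-- The negative trace `posTrace n (-Q)` of the class `Q` whose positive trace is `P`
(and `∅` if there is no such class). -/
def mirror (P : Set (Fin n)) : Set (Fin n) :=
  {i | ∃ Q ∈ bt.classes, P.Nonempty ∧ posTrace n Q = P ∧ i ∈ posTrace n (-Q)}

lemma mirror_posTrace {Q : Set ℤ} (hQ : Q ∈ bt.classes) (hne : (posTrace n Q).Nonempty) :
    bt.mirror (posTrace n Q) = posTrace n (-Q) := by
  ext i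
  refine ⟨fun ⟨Q', hQ', _, h, hi⟩ => ?_, fun hi => ⟨Q, hQ, hne, rfl, hi⟩⟩
  rwa [← bt.eq_of_posTrace_eq hQ' hQ h (h ▸ hne)]

lemma mirror_eq_empty {P : Set (Fin n)} (hP : P ∉ bt.traceClasses) : bt.mirror P = ∅ :=
  eq_empty_of_forall_notMem fun _ ⟨Q, hQ, hne, h, _⟩ => hP ⟨hne, Q, hQ, h⟩

lemma exists_of_mirror_nonempty {P : Set (Fin n)} (h : (bt.mirror P).Nonempty) :
    ∃ Q ∈ bt.classes, (posTrace n Q).Nonempty ∧ posTrace n Q = P ∧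
      bt.mirror P = posTrace n (-Q) := by
  obtain ⟨_, Q, hQ, hne, rfl, -⟩ := h
  exact ⟨Q, hQ, hne, rfl, bt.mirror_posTrace hQ hne⟩

lemma exists_neg_eq_of_mirror_eq_self {P : Set (Fin n)} (hne : P.Nonempty)
    (h : bt.mirror P = P) : ∃ Q ∈ bt.classes, -Q = Q ∧ posTrace n Q = P := by
  obtain ⟨Q, hQ, hQne, rfl, hm⟩ := bt.exists_of_mirror_nonempty (h ▸ hne)
  have htr : posTrace n (-Q) = posTrace n Q := hm.symm.trans h
  exact ⟨Q, hQ, bt.eq_of_posTrace_eq (bt.neg_mem Q hQ) hQ htr (htr ▸ hQne), rfl⟩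

open Classical in
noncomputable def toTagged : TaggedPartition n where
  classes := bt.traceClasses
  classes_nonempty _ h := h.1
  cover i := by
    obtain ⟨Q, hQ, hi⟩ := bt.cover i.toPosInt (by grind [Fin.toPosInt_mem_Icc])
      (Fin.toPosInt_mem_Icc i).2
    exact ⟨posTrace n Q, ⟨⟨i, hi⟩, Q, hQ, rfl⟩, hi⟩
  eq_of_inter := by
    rintro _ ⟨-, Q, hQ, rfl⟩ _ ⟨-, Q', hQ', rfl⟩ ⟨i, hi, hi'⟩
    rw [bt.eq_of_inter Q hQ Q' hQ' ⟨_, hi, hi'⟩]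
  star P := if (bt.mirror P).Nonempty then some (bt.mirror P) else none
  star_dom P h := by
    obtain ⟨Q, hQ, hne, rfl, -⟩ := bt.exists_of_mirror_nonempty (by_contra fun h' => h (if_neg h'))
    exact ⟨hne, Q, hQ, rfl⟩
  star_ran P T h := by
    simp only [Option.ite_none_right_eq_some, Option.some_inj] at h
    obtain ⟨Q, hQ, -, -, hm⟩ := bt.exists_of_mirror_nonempty h.1
    exact ⟨h.2 ▸ h.1, -Q, bt.neg_mem Q hQ, hm ▸ h.2⟩
  star_invol P T h := by
    simp only [Option.ite_none_right_eq_some, Option.some_inj] at h ⊢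
    obtain ⟨Q, hQ, hne, rfl, hm⟩ := bt.exists_of_mirror_nonempty h.1
    rw [← h.2, hm, bt.mirror_posTrace (bt.neg_mem Q hQ) (hm ▸ h.1), neg_neg]
    exact ⟨hne, rfl⟩
  star_fixed P P' h h' := by
    simp only [Option.ite_none_right_eq_some, Option.some_inj] at h h'
    obtain ⟨Q, hQ, hQneg, rfl⟩ := bt.exists_neg_eq_of_mirror_eq_self (h.2 ▸ h.1) h.2
    obtain ⟨Q', hQ', hQ'neg, rfl⟩ := bt.exists_neg_eq_of_mirror_eq_self (h'.2 ▸ h'.1) h'.2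
    rw [bt.eq_of_neg_eq hQ hQ' hQneg hQ'neg]

lemma toTagged_star_eq_some {P T : Set (Fin n)} :
    bt.toTagged.star P = some T ↔ (bt.mirror P).Nonempty ∧ bt.mirror P = T := by
  simp [toTagged]

lemma toTagged_partner (P : Set (Fin n)) : bt.toTagged.partner P = bt.mirror P := by
  by_cases h : (bt.mirror P).Nonempty
  · exact TaggedPartition.partner_eq_of_star_eq_some _ ((bt.toTagged_star_eq_some).2 ⟨h, rfl⟩)
  · simp [TaggedPartition.partner, toTagged, not_nonempty_iff_eq_empty.1 h]

end BTypePartition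

namespace TaggedPartition

variable (tp : TaggedPartition n)

lemma block_mem_toBType {P : Set (Fin n)} (hP : P ∈ tp.classes) :
    tp.block P ∈ tp.toBType.classes := by
  obtain ⟨i, hi⟩ := tp.classes_nonempty P hP
  exact ⟨i.toPosInt, by grind [Fin.toPosInt_mem_Icc], tp.blockAt_toPosInt hP hi⟩

lemma traceClasses_toBType : tp.toBType.traceClasses = tp.classes := by
  ext P
  refine ⟨?_, fun hP => ⟨tp.classes_nonempty P hP, _, tp.block_mem_toBType hP, tp.posTrace_block P⟩⟩
  rintro ⟨⟨i, hi⟩, _, ⟨m, hm, rfl⟩, rfl⟩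
  obtain ⟨P, hP, hiP⟩ := tp.cover i
  rwa [← tp.blockAt_eq_of_mem hm hi, tp.blockAt_toPosInt hP hiP, posTrace_block]

lemma toTagged_toBType : tp.toBType.toTagged = tp := by
  refine ext_of_partner _ tp.traceClasses_toBType fun P => ?_
  rw [BTypePartition.toTagged_partner]
  by_cases hP : P ∈ tp.classes
  · have := tp.toBType.mirror_posTrace (tp.block_mem_toBType hP)
      (by rw [posTrace_block]; exact tp.classes_nonempty P hP)
    rwa [posTrace_block, tp.posTrace_neg_block hP] at this
  · have hstar : tp.star P = none := by
      by_contra h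
      exact hP (tp.star_dom P h)
    rw [BTypePartition.mirror_eq_empty _ (by rwa [traceClasses_toBType]), partner, hstar,
      Option.getD_none]

end TaggedPartition

namespace BTypePartition

variable (bt : BTypePartition n)

lemma toTagged_fixedClass {Q₀ : Set ℤ} (hQ₀ : Q₀ ∈ bt.classes) (hneg : -Q₀ = Q₀) :
    bt.toTagged.fixedClass = posTrace n Q₀ := by
  ext i
  simp only [TaggedPartition.fixedClass, mem_sUnion, mem_ofPred_eq, toTagged_star_eq_some]
  constructor
  · rintro ⟨P, ⟨hne, hm⟩, hi⟩
    obtain ⟨Q, hQ, hQneg, rfl⟩ := bt.exists_neg_eq_of_mirror_eq_self (hm ▸ hne) hm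
    rwa [bt.eq_of_neg_eq hQ hQ₀ hQneg hneg] at hi
  · intro hi
    have hm : bt.mirror (posTrace n Q₀) = posTrace n Q₀ := by
      rw [bt.mirror_posTrace hQ₀ ⟨i, hi⟩, hneg]
    exact ⟨_, ⟨hm.symm ▸ ⟨i, hi⟩, hm⟩, hi⟩

lemma toTagged_zeroBlock_mem : bt.toTagged.zeroBlock ∈ bt.classes := by
  obtain ⟨Q₀, hQ₀, h0⟩ := bt.cover 0 (by simp) (by simp)
  have hneg := bt.neg_eq_of_zero_mem hQ₀ h0
  convert hQ₀
  rw [TaggedPartition.zeroBlock, bt.toTagged_fixedClass hQ₀ hneg]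
  nth_rw 2 [← hneg]
  rw [← diff_zero_eq_signedSet (bt.subset_Icc Q₀ hQ₀), insert_sdiff_singleton, insert_eq_of_mem h0]

lemma toTagged_block_mem {P : Set (Fin n)} (hP : P ∈ bt.toTagged.classes) :
    bt.toTagged.block P ∈ bt.classes := by
  obtain ⟨hne, Q, hQ, rfl⟩ := hP
  by_cases hfix : bt.toTagged.star (posTrace n Q) = some (posTrace n Q)
  · rw [TaggedPartition.block_of_star_eq _ hfix]
    exact bt.toTagged_zeroBlock_mem
  have h0 : (0 : ℤ) ∉ Q := fun h0 => hfix <| (bt.toTagged_star_eq_some).2 <| by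
    rw [bt.mirror_posTrace hQ hne, bt.neg_eq_of_zero_mem hQ h0]
    exact ⟨hne, rfl⟩
  rwa [TaggedPartition.block_of_star_ne _ hfix, toTagged_partner, bt.mirror_posTrace hQ hne,
    ← diff_zero_eq_signedSet (bt.subset_Icc Q hQ), sdiff_singleton_eq_self h0]

lemma toTagged_blockAt_mem {m : ℤ} (hm : m ∈ Icc (-(n : ℤ)) n) :
    bt.toTagged.blockAt m ∈ bt.classes := by
  rcases bt.toTagged.blockAt_cases hm with rfl | ⟨P, hP, -, -, ⟨-, h⟩ | ⟨-, h⟩⟩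
  · exact bt.toTagged_zeroBlock_mem
  · exact h ▸ bt.toTagged_block_mem hP
  · exact h ▸ bt.neg_mem _ (bt.toTagged_block_mem hP)

lemma toBType_toTagged : bt.toTagged.toBType = bt := by
  refine ext_of_classes _ (subset_antisymm ?_ fun Q hQ => ?_)
  · rintro _ ⟨m, hm, rfl⟩
    exact bt.toTagged_blockAt_mem hm
  · obtain ⟨m, hmQ⟩ := bt.classes_nonempty Q hQ
    have hm := bt.subset_Icc Q hQ hmQ
    exact ⟨m, hm, bt.eq_of_inter _ (bt.toTagged_blockAt_mem hm) Q hQ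
      ⟨m, bt.toTagged.mem_blockAt_self hm, hmQ⟩⟩

end BTypePartition

end

noncomputable def taggedPartitionEquivBType (n : ℕ) : TaggedPartition n ≃ BTypePartition n where
  toFun := TaggedPartition.toBType
  invFun := BTypePartition.toTagged
  left_inv := TaggedPartition.toTagged_toBType
  right_inv := BTypePartition.toBType_toTagged

/-- Proposition 7.4. For every `n`, the tagged partitions of
`{1,…,n}` are in bijection with the B-type partitions of `{−n,…,n}`; in particular
the two sets have the same cardinality. -/
theorem taggedPartition_equiv_bTypePartition (n : ℕ) :
    Nonempty (TaggedPartition n ≃ BTypePartition n) ∧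
    Nat.card (TaggedPartition n) = Nat.card (BTypePartition n) :=
  ⟨⟨taggedPartitionEquivBType n⟩, Nat.card_congr (taggedPartitionEquivBType n)⟩
end

section
/- Let e_n denote the number of evenly tagged tagged partitions of {1,…,n} (with e_0 = 1). Then for all n ≥ 0, e_{n+1} = e_n + ∑_{k,ℓ ≥ 0, k+2ℓ+1 = n} (n! / (k! · ℓ! · (ℓ+1)!)) · e_k. -/
/-!
Sort the evenly tagged partitions of `Fin (n + 1)` by the class `P` of the new point
`Fin.last n`. If `P* = P`, deleting the new point leaves an evenly tagged partition of `Fin n`,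
and conversely the new point can be added to the fixed class of any evenly tagged partition of
`Fin n` (or form a fixed singleton): these account for `e_n`. Otherwise `P* = Q ≠ P` with
`#Q = #P = ℓ + 1`, and the pair is recorded by the disjoint sets `P \ {Fin.last n}` and `Q` of
sizes `ℓ` and `ℓ + 1` in `Fin n`, which can be chosen in `n! / (k! ℓ! (ℓ + 1)!)` ways, where
`k = n - 2ℓ - 1`; deleting `P` and `Q` leaves an evenly tagged partition of the remaining `k`
points.

Both deletions are pullbacks `comap u` along the inclusion `u` of the remaining points. They
invert the two extension maps because a tagged partition is determined by its pullback along
`u` together with its classes meeting the complement of the range of `u`.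
-/

namespace Fin

open Set

variable {n : ℕ}

theorem last_notMem_image_castSucc (Y : Set (Fin n)) : last n ∉ castSucc '' Y :=
  fun ⟨j, _, hj⟩ => castSucc_ne_last j hj

theorem range_castSucc_eq_compl_last :
    range (castSucc : Fin n → Fin (n + 1)) = {last n}ᶜ := by
  ext i
  rw [mem_range, mem_compl_singleton_iff, exists_castSucc_eq]

theorem preimage_castSucc_insert_last (A : Set (Fin n)) :
    castSucc ⁻¹' insert (last n) (castSucc '' A) = A := by
  ext j
  simp [castSucc_ne_last]

theorem insert_last_image_preimage_castSucc {P : Set (Fin (n + 1))} (hlast : last n ∈ P) :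
    insert (last n) (castSucc '' (castSucc ⁻¹' P)) = P := by
  rw [image_preimage_eq_inter_range, range_castSucc_eq_compl_last, ← sdiff_eq,
    insert_sdiff_singleton, insert_eq_of_mem hlast]

theorem image_castSucc_compl (A : Set (Fin n)) :
    castSucc '' Aᶜ = (insert (last n) (castSucc '' A))ᶜ := by
  rw [image_compl_eq_range_sdiff_image (castSucc_injective n), range_castSucc_eq_compl_last,
    sdiff_eq, ← compl_union, ← insert_eq]

end Fin

namespace Nat

variable {n : ℕ}

theorem choose_mul_choose_eq_factorial_div {l : ℕ} (h : 2 * l + 1 ≤ n) :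
    n.choose l * (n - l).choose (l + 1) =
      n.factorial / ((n - (2 * l + 1)).factorial * l.factorial * (l + 1).factorial) := by
  have e₁ := choose_mul_factorial_mul_factorial (show l ≤ n by omega)
  have e₂ := choose_mul_factorial_mul_factorial (show l + 1 ≤ n - l by omega)
  rw [show n - l - (l + 1) = n - (2 * l + 1) by omega] at e₂
  refine (Nat.div_eq_of_eq_mul_left (by positivity) ?_).symm
  rw [← e₁, ← e₂]
  ring

end Nat

namespace Finset

variable {n : ℕ}

theorem filter_disjoint_card_eq_powersetCard (S : Finset (Fin n)) :
    univ.filter (fun T => Disjoint S T ∧ T.card = S.card + 1) =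
      Sᶜ.powersetCard (S.card + 1) := by
  ext T
  simp [mem_powersetCard, subset_compl_iff_disjoint_left]

theorem sum_filter_add_two_mul_add_one_eq (f : ℕ → ℕ → ℕ) :
    ∑ q ∈ (range (n + 1) ×ˢ range (n + 1)).filter
        (fun q => q.1 + 2 * q.2 + 1 = n), f q.1 q.2 =
      ∑ l ∈ range (n + 1), if 2 * l + 1 ≤ n then f (n - (2 * l + 1)) l else 0 := by
  rw [sum_filter, sum_product_right]
  refine sum_congr rfl fun l _ => ?_
  split_ifs with h
  · have hk : ∀ k, k + 2 * l + 1 = n ↔ n - (2 * l + 1) = k := fun k => by omega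
    simp only [hk]
    rw [sum_ite_eq, if_pos (mem_range.2 (by omega))]
  · exact sum_eq_zero fun k _ => if_neg (by omega)

end Finset

namespace TaggedPartition

open Set Function

variable {m n N : ℕ}

@[ext]
theorem ext {tp tq : TaggedPartition N} (hc : tp.classes = tq.classes)
    (hs : tp.star = tq.star) : tp = tq := by
  cases tp; cases tq; simp_all

instance : Finite (TaggedPartition N) :=
  Finite.of_injective (fun tp : TaggedPartition N => (tp.classes, tp.star))
    fun _ _ h => ext (congrArg Prod.fst h) (congrArg Prod.snd h)

section Basic

variable {tp : TaggedPartition N} {P Q X W : Set (Fin N)} {i : Fin N}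

theorem eq_of_mem_of_mem (hP : P ∈ tp.classes) (hQ : Q ∈ tp.classes) (hiP : i ∈ P)
    (hiQ : i ∈ Q) : P = Q :=
  tp.eq_of_inter P hP Q hQ ⟨i, hiP, hiQ⟩

theorem notMem_of_ne (hP : P ∈ tp.classes) (hX : X ∈ tp.classes) (hiP : i ∈ P)
    (hne : X ≠ P) : i ∉ X :=
  fun hiX => hne (eq_of_mem_of_mem hX hP hiX hiP)

theorem star_ne_of_ne (hPQ : tp.star P = some Q) (hXW : tp.star X = some W) (hXQ : X ≠ Q) :
    W ≠ P := by
  rintro rfl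
  have := tp.star_invol _ _ hXW
  simp_all

theorem disjoint_of_ne (hP : P ∈ tp.classes) (hQ : Q ∈ tp.classes) (hne : P ≠ Q) :
    Disjoint P Q :=
  disjoint_left.2 fun _ hiP hiQ => hne (eq_of_mem_of_mem hP hQ hiP hiQ)

theorem star_ne_some_self (h : tp.star X = some W) (hne : X ≠ W) : tp.star X ≠ some X :=
  fun hX => hne (Option.some_inj.1 (hX.symm.trans h))

theorem mem_classes_of_star_eq_some (h : tp.star X = some W) : X ∈ tp.classes :=
  tp.star_dom X (h ▸ Option.some_ne_none W)

theorem FullyTagged.exists_star_eq_some (h : tp.FullyTagged) (hX : X ∈ tp.classes) :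
    ∃ W, tp.star X = some W :=
  Option.ne_none_iff_exists'.1 (h X hX)

end Basic

noncomputable def ofFunctionalRel {α β : Type*} (r : α → β → Prop) (a : α) : Option β :=
  open Classical in if h : ∃ b, r a b then some h.choose else none

theorem ofFunctionalRel_eq_some {α β : Type*} {r : α → β → Prop}
    (hr : ∀ {a b b'}, r a b → r a b' → b = b') {a : α} {b : β} :
    ofFunctionalRel r a = some b ↔ r a b := by
  unfold ofFunctionalRel
  split_ifs with h
  · exact ⟨fun hb => Option.some_inj.1 hb ▸ h.choose_spec,
      fun hb => congrArg some (hr h.choose_spec hb)⟩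
  · exact ⟨fun hb => by simp at hb, fun hb => absurd ⟨b, hb⟩ h⟩

section Comap

variable (u : Fin m → Fin N) (tp : TaggedPartition N)

def ComapStarRel (Y Z : Set (Fin m)) : Prop :=
  ∃ X W, X ∈ tp.classes ∧ tp.star X = some W ∧ u ⁻¹' X = Y ∧ u ⁻¹' W = Z ∧
    Y.Nonempty ∧ Z.Nonempty

variable {u tp}

theorem ComapStarRel.unique {Y Z Z' : Set (Fin m)} (h : ComapStarRel u tp Y Z)
    (h' : ComapStarRel u tp Y Z') : Z = Z' := by
  obtain ⟨X, W, hX, hXW, rfl, rfl, ⟨y, hy⟩, -⟩ := h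
  obtain ⟨X', W', hX', hXW', hXX', rfl, -⟩ := h'
  obtain rfl : X = X' := eq_of_mem_of_mem hX hX' hy (hXX' ▸ hy : y ∈ u ⁻¹' X')
  rw [Option.some_inj.1 (hXW.symm.trans hXW')]

theorem ComapStarRel.symm {Y Z : Set (Fin m)} (h : ComapStarRel u tp Y Z) :
    ComapStarRel u tp Z Y := by
  obtain ⟨X, W, -, hXW, hY, hZ, hYne, hZne⟩ := h
  exact ⟨W, X, tp.star_ran _ _ hXW, tp.star_invol _ _ hXW, hZ, hY, hZne, hYne⟩

theorem ComapStarRel.fixed {Y : Set (Fin m)} (h : ComapStarRel u tp Y Y) :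
    ∃ X, tp.star X = some X ∧ u ⁻¹' X = Y := by
  obtain ⟨X, W, hX, hXW, rfl, hW, ⟨y, hy⟩, -⟩ := h
  have hy' : u y ∈ W := (hW.symm ▸ hy : y ∈ u ⁻¹' W)
  obtain rfl := eq_of_mem_of_mem hX (tp.star_ran _ _ hXW) hy hy'
  exact ⟨X, hXW, rfl⟩

theorem ofFunctionalRel_comapStarRel {Y Z : Set (Fin m)} :
    ofFunctionalRel (ComapStarRel u tp) Y = some Z ↔ ComapStarRel u tp Y Z :=
  ofFunctionalRel_eq_some (r := ComapStarRel u tp) ComapStarRel.unique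

variable (u tp)

noncomputable def comap : TaggedPartition m where
  classes := {Y | ∃ X ∈ tp.classes, u ⁻¹' X = Y ∧ Y.Nonempty}
  classes_nonempty := fun _ ⟨_, _, _, hY⟩ => hY
  cover i := by
    obtain ⟨X, hX, hiX⟩ := tp.cover (u i)
    exact ⟨u ⁻¹' X, ⟨X, hX, rfl, i, hiX⟩, hiX⟩
  eq_of_inter := by
    rintro _ ⟨X, hX, rfl, -⟩ _ ⟨X', hX', rfl, -⟩ ⟨y, hy, hy'⟩
    rw [eq_of_mem_of_mem hX hX' hy hy']
  star := ofFunctionalRel (ComapStarRel u tp)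
  star_dom Y h := by
    obtain ⟨Z, hZ⟩ := Option.ne_none_iff_exists'.1 h
    obtain ⟨X, -, hX, -, hY, -, hYne, -⟩ :=
      ofFunctionalRel_comapStarRel.1 hZ
    exact ⟨X, hX, hY, hYne⟩
  star_ran Y Z h := by
    obtain ⟨X, W, -, hXW, -, hZ, -, hZne⟩ :=
      ofFunctionalRel_comapStarRel.1 h
    exact ⟨W, tp.star_ran _ _ hXW, hZ, hZne⟩
  star_invol Y Z h := ofFunctionalRel_comapStarRel.2
    (ofFunctionalRel_comapStarRel.1 h).symm
  star_fixed Y Y' h h' := by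
    obtain ⟨X, hX, rfl⟩ := (ofFunctionalRel_comapStarRel.1 h).fixed
    obtain ⟨X', hX', rfl⟩ :=
      (ofFunctionalRel_comapStarRel.1 h').fixed
    rw [tp.star_fixed X X' hX hX']

variable {u tp}

theorem mem_comap_classes {Y : Set (Fin m)} :
    Y ∈ (comap u tp).classes ↔ ∃ X ∈ tp.classes, u ⁻¹' X = Y ∧ Y.Nonempty :=
  Iff.rfl

theorem comap_star_eq_some {Y Z : Set (Fin m)} :
    (comap u tp).star Y = some Z ↔ ComapStarRel u tp Y Z :=
  ofFunctionalRel_comapStarRel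

theorem comap_evenlyTagged (hu : Injective u) (h : tp.EvenlyTagged)
    (hpair : ∀ X W, tp.star X = some W → X ≠ W → (u ⁻¹' X).Nonempty →
      X ⊆ range u ∧ W ⊆ range u) :
    (comap u tp).EvenlyTagged := by
  refine ⟨?_, fun Y Z hYZ => ?_⟩
  · rintro _ ⟨X, hX, rfl, hY⟩
    obtain ⟨W, hXW⟩ := h.1.exists_star_eq_some hX
    have hW : (u ⁻¹' W).Nonempty := by
      obtain rfl | hne := eq_or_ne X W
      · exact hY
      · exact (tp.classes_nonempty _ (tp.star_ran _ _ hXW)).preimage' (hpair X W hXW hne hY).2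
    rw [comap_star_eq_some.2 ⟨X, W, hX, hXW, rfl, rfl, hY, hW⟩]
    exact Option.some_ne_none _
  · obtain ⟨X, W, -, hXW, rfl, rfl, hY, -⟩ := comap_star_eq_some.1 hYZ
    obtain rfl | hne := eq_or_ne X W
    · rfl
    · obtain ⟨hXu, hWu⟩ := hpair X W hXW hne hY
      rw [ncard_preimage_of_injective_subset_range hu hXu,
        ncard_preimage_of_injective_subset_range hu hWu]
      exact h.2 X W hXW

end Comap

section SnocFixed

variable (tp : TaggedPartition n)

/-- The fixed class of `tp`, or `∅` if there is none. -/
def fixedSet : Set (Fin n) := {i | ∃ P, tp.star P = some P ∧ i ∈ P}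

def snocFixedClass : Set (Fin (n + 1)) := insert (Fin.last n) (Fin.castSucc '' tp.fixedSet)

def SnocFixedStarRel (X Z : Set (Fin (n + 1))) : Prop :=
  X = tp.snocFixedClass ∧ Z = tp.snocFixedClass ∨
    ∃ Y W, tp.star Y = some W ∧ Y ≠ W ∧ Fin.castSucc '' Y = X ∧ Fin.castSucc '' W = Z

variable {tp} {P Y W : Set (Fin n)} {j : Fin n}

theorem fixedSet_eq (h : tp.star P = some P) : tp.fixedSet = P := by
  ext i
  refine ⟨fun ⟨Q, hQ, hiQ⟩ => ?_, fun hi => ⟨P, h, hi⟩⟩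
  rwa [tp.star_fixed Q P hQ h] at hiQ

theorem star_fixedSet (h : tp.fixedSet.Nonempty) : tp.star tp.fixedSet = some tp.fixedSet := by
  obtain ⟨i, P, hP, -⟩ := h
  rwa [fixedSet_eq hP]

theorem star_eq_self_of_mem_fixedSet (hY : Y ∈ tp.classes) (hjY : j ∈ Y)
    (hj : j ∈ tp.fixedSet) : tp.star Y = some Y := by
  obtain ⟨P, hP, hjP⟩ := hj
  rwa [eq_of_mem_of_mem hY (tp.star_ran _ _ hP) hjY hjP]

theorem image_castSucc_ne_snocFixedClass (Y : Set (Fin n)) :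
    Fin.castSucc '' Y ≠ tp.snocFixedClass :=
  fun h => Fin.last_notMem_image_castSucc Y (h ▸ mem_insert _ _)

theorem preimage_castSucc_snocFixedClass :
    Fin.castSucc ⁻¹' tp.snocFixedClass = tp.fixedSet :=
  Fin.preimage_castSucc_insert_last _

theorem disjoint_snocFixedClass_image (hY : Y ∈ tp.classes) (hYfix : tp.star Y ≠ some Y) :
    Disjoint tp.snocFixedClass (Fin.castSucc '' Y) := by
  rw [disjoint_comm, disjoint_left]
  rintro _ ⟨j, hjY, rfl⟩ (hj | ⟨k, hk, hkj⟩)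
  · exact Fin.castSucc_ne_last j hj
  · obtain rfl := Fin.castSucc_injective n hkj
    exact hYfix (star_eq_self_of_mem_fixedSet hY hjY hk)

theorem SnocFixedStarRel.unique {X Z Z' : Set (Fin (n + 1))} (h : tp.SnocFixedStarRel X Z)
    (h' : tp.SnocFixedStarRel X Z') : Z = Z' := by
  rcases h with ⟨rfl, rfl⟩ | ⟨Y, W, hYW, -, rfl, rfl⟩ <;>
    rcases h' with ⟨hX, rfl⟩ | ⟨Y', W', hYW', -, hX, rfl⟩
  · rfl
  · exact absurd hX (image_castSucc_ne_snocFixedClass Y')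
  · exact absurd hX (image_castSucc_ne_snocFixedClass Y)
  · obtain rfl := (image_injective.2 (Fin.castSucc_injective n)) hX
    rw [Option.some_inj.1 (hYW.symm.trans hYW')]

theorem SnocFixedStarRel.symm {X Z : Set (Fin (n + 1))} (h : tp.SnocFixedStarRel X Z) :
    tp.SnocFixedStarRel Z X := by
  rcases h with ⟨rfl, rfl⟩ | ⟨Y, W, hYW, hne, rfl, rfl⟩
  · exact Or.inl ⟨rfl, rfl⟩
  · exact Or.inr ⟨W, Y, tp.star_invol _ _ hYW, hne.symm, rfl, rfl⟩

theorem SnocFixedStarRel.eq_of_self {X : Set (Fin (n + 1))} (h : tp.SnocFixedStarRel X X) :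
    X = tp.snocFixedClass := by
  rcases h with ⟨rfl, -⟩ | ⟨Y, W, -, hne, rfl, hW⟩
  · rfl
  · exact absurd ((image_injective.2 (Fin.castSucc_injective n)) hW).symm hne

theorem ofFunctionalRel_snocFixedStarRel {X Z : Set (Fin (n + 1))} :
    ofFunctionalRel tp.SnocFixedStarRel X = some Z ↔ tp.SnocFixedStarRel X Z :=
  ofFunctionalRel_eq_some (r := tp.SnocFixedStarRel) SnocFixedStarRel.unique

variable (tp)

/-- Adds the point `Fin.last n` to the fixed class of `tp` (creating a fixed singleton if `tp`
has no fixed class). -/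
noncomputable def snocFixed : TaggedPartition (n + 1) where
  classes := insert tp.snocFixedClass
    (image Fin.castSucc '' {Y | Y ∈ tp.classes ∧ tp.star Y ≠ some Y})
  classes_nonempty := by
    rintro _ (rfl | ⟨Y, ⟨hY, -⟩, rfl⟩)
    · exact insert_nonempty _ _
    · exact (tp.classes_nonempty Y hY).image _
  cover i := by
    induction i using Fin.lastCases with
    | last => exact ⟨_, mem_insert _ _, mem_insert _ _⟩
    | cast j =>
      obtain ⟨Y, hY, hjY⟩ := tp.cover j
      by_cases hYfix : tp.star Y = some Y
      · exact ⟨_, mem_insert _ _, mem_insert_of_mem _ ⟨j, ⟨Y, hYfix, hjY⟩, rfl⟩⟩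
      · exact ⟨_, mem_insert_of_mem _ ⟨Y, ⟨hY, hYfix⟩, rfl⟩, j, hjY, rfl⟩
  eq_of_inter := by
    rintro _ (rfl | ⟨Y, ⟨hY, hYfix⟩, rfl⟩) _ (rfl | ⟨Y', ⟨hY', hYfix'⟩, rfl⟩) ⟨x, hx, hx'⟩
    · rfl
    · exact absurd hx' (disjoint_left.1 (disjoint_snocFixedClass_image hY' hYfix') hx)
    · exact absurd hx (disjoint_left.1 (disjoint_snocFixedClass_image hY hYfix) hx')
    · obtain ⟨j, hj, rfl⟩ := hx
      obtain ⟨k, hk, hkj⟩ := hx'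
      obtain rfl := Fin.castSucc_injective n hkj
      rw [eq_of_mem_of_mem hY hY' hj hk]
  star := ofFunctionalRel tp.SnocFixedStarRel
  star_dom X h := by
    obtain ⟨Z, hZ⟩ := Option.ne_none_iff_exists'.1 h
    rcases ofFunctionalRel_snocFixedStarRel.1 hZ with ⟨rfl, -⟩ | ⟨Y, W, hYW, hne, rfl, -⟩
    · exact mem_insert _ _
    · exact mem_insert_of_mem _
        ⟨Y, ⟨mem_classes_of_star_eq_some hYW, star_ne_some_self hYW hne⟩, rfl⟩
  star_ran X Z h := by
    rcases ofFunctionalRel_snocFixedStarRel.1 h with ⟨-, rfl⟩ | ⟨Y, W, hYW, hne, -, rfl⟩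
    · exact mem_insert _ _
    · exact mem_insert_of_mem _
        ⟨W, ⟨tp.star_ran _ _ hYW, star_ne_some_self (tp.star_invol _ _ hYW) hne.symm⟩, rfl⟩
  star_invol X Z h :=
    ofFunctionalRel_snocFixedStarRel.2 (ofFunctionalRel_snocFixedStarRel.1 h).symm
  star_fixed X X' h h' := by
    rw [(ofFunctionalRel_snocFixedStarRel.1 h).eq_of_self,
      (ofFunctionalRel_snocFixedStarRel.1 h').eq_of_self]

variable {tp} {X Z : Set (Fin (n + 1))}

theorem snocFixed_star_eq_some : (snocFixed tp).star X = some Z ↔ tp.SnocFixedStarRel X Z :=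
  ofFunctionalRel_snocFixedStarRel

theorem snocFixedClass_mem_classes : tp.snocFixedClass ∈ (snocFixed tp).classes :=
  mem_insert _ _

theorem last_mem_snocFixedClass : Fin.last n ∈ tp.snocFixedClass := mem_insert _ _

theorem snocFixed_star_snocFixedClass :
    (snocFixed tp).star tp.snocFixedClass = some tp.snocFixedClass :=
  snocFixed_star_eq_some.2 (Or.inl ⟨rfl, rfl⟩)

theorem image_castSucc_mem_snocFixed_classes (hY : Y ∈ tp.classes)
    (hYfix : tp.star Y ≠ some Y) : Fin.castSucc '' Y ∈ (snocFixed tp).classes :=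
  mem_insert_of_mem _ ⟨Y, ⟨hY, hYfix⟩, rfl⟩

theorem eq_snocFixedClass_of_last_mem (hX : X ∈ (snocFixed tp).classes)
    (hlast : Fin.last n ∈ X) : X = tp.snocFixedClass := by
  rcases hX with rfl | ⟨Y, -, rfl⟩
  · rfl
  · exact absurd hlast (Fin.last_notMem_image_castSucc Y)

theorem snocFixed_evenlyTagged (h : tp.EvenlyTagged) : (snocFixed tp).EvenlyTagged := by
  refine ⟨?_, fun X Z hXZ => ?_⟩
  · rintro _ (rfl | ⟨Y, ⟨hY, hYfix⟩, rfl⟩)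
    · rw [snocFixed_star_snocFixedClass]
      exact Option.some_ne_none _
    · obtain ⟨W, hYW⟩ := h.1.exists_star_eq_some hY
      have hne : Y ≠ W := by rintro rfl; exact hYfix hYW
      rw [snocFixed_star_eq_some.2 (Or.inr ⟨Y, W, hYW, hne, rfl, rfl⟩)]
      exact Option.some_ne_none _
  · rcases snocFixed_star_eq_some.1 hXZ with ⟨rfl, rfl⟩ | ⟨Y, W, hYW, -, rfl, rfl⟩
    · rfl
    · rw [ncard_image_of_injective _ (Fin.castSucc_injective n),
        ncard_image_of_injective _ (Fin.castSucc_injective n)]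
      exact h.2 Y W hYW

theorem mem_comap_castSucc_snocFixed_classes :
    Y ∈ (comap Fin.castSucc (snocFixed tp)).classes ↔ Y ∈ tp.classes := by
  rw [mem_comap_classes]
  constructor
  · rintro ⟨_, rfl | ⟨Y', ⟨hY', -⟩, rfl⟩, rfl, hYne⟩
    · rw [preimage_castSucc_snocFixedClass] at hYne ⊢
      exact mem_classes_of_star_eq_some (star_fixedSet hYne)
    · rwa [preimage_image_eq _ (Fin.castSucc_injective n)]
  · intro hY
    by_cases hYfix : tp.star Y = some Y
    · exact ⟨_, snocFixedClass_mem_classes,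
        by rw [preimage_castSucc_snocFixedClass, fixedSet_eq hYfix], tp.classes_nonempty Y hY⟩
    · exact ⟨_, image_castSucc_mem_snocFixed_classes hY hYfix,
        preimage_image_eq _ (Fin.castSucc_injective n), tp.classes_nonempty Y hY⟩

theorem comap_castSucc_snocFixed_star_eq_some {Z : Set (Fin n)} :
    (comap Fin.castSucc (snocFixed tp)).star Y = some Z ↔ tp.star Y = some Z := by
  have hpre : ∀ Y, Fin.castSucc ⁻¹' (Fin.castSucc '' Y) = Y :=
    fun Y => preimage_image_eq Y (Fin.castSucc_injective n)
  rw [comap_star_eq_some]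
  constructor
  · rintro ⟨X, W, -, hXW, rfl, rfl, hYne, -⟩
    rcases snocFixed_star_eq_some.1 hXW with ⟨rfl, rfl⟩ | ⟨Y', W', hYW', -, rfl, rfl⟩
    · rw [preimage_castSucc_snocFixedClass] at hYne ⊢
      exact star_fixedSet hYne
    · rwa [hpre, hpre]
  · intro hYZ
    have hY := tp.classes_nonempty _ (mem_classes_of_star_eq_some hYZ)
    have hZ := tp.classes_nonempty _ (tp.star_ran _ _ hYZ)
    by_cases hne : Y = Z
    · subst hne
      refine ⟨_, _, snocFixedClass_mem_classes, snocFixed_star_snocFixedClass, ?_, ?_, hY, hY⟩ <;>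
        rw [preimage_castSucc_snocFixedClass, fixedSet_eq hYZ]
    · exact ⟨_, _, image_castSucc_mem_snocFixed_classes (mem_classes_of_star_eq_some hYZ)
        (star_ne_some_self hYZ hne), snocFixed_star_eq_some.2 (Or.inr ⟨Y, Z, hYZ, hne, rfl, rfl⟩),
        hpre Y, hpre Z, hY, hZ⟩

theorem comap_castSucc_snocFixed (tp : TaggedPartition n) :
    comap Fin.castSucc (snocFixed tp) = tp :=
  ext (Set.ext fun _ => mem_comap_castSucc_snocFixed_classes)
    (funext fun _ => Option.ext fun _ => comap_castSucc_snocFixed_star_eq_some)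

end SnocFixed

section EqOfComapEq

variable {u : Fin m → Fin N} {tp₁ tp₂ : TaggedPartition N}

theorem mem_classes_of_comap_eq (hc : comap u tp₁ = comap u tp₂)
    (hcl : ∀ X, ¬ X ⊆ range u → (X ∈ tp₁.classes ↔ X ∈ tp₂.classes)) {X : Set (Fin N)}
    (hX : X ∈ tp₁.classes) : X ∈ tp₂.classes := by
  by_cases hXu : X ⊆ range u
  · obtain ⟨y, hy⟩ := (tp₁.classes_nonempty X hX).preimage' hXu
    have hmem : u ⁻¹' X ∈ (comap u tp₂).classes := hc ▸ ⟨X, hX, rfl, y, hy⟩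
    obtain ⟨X', hX', hpre, -⟩ := hmem
    by_cases hX'u : X' ⊆ range u
    · rwa [← image_preimage_eq_of_subset hXu, ← hpre, image_preimage_eq_of_subset hX'u]
    · rwa [eq_of_mem_of_mem hX ((hcl X' hX'u).2 hX') hy (hpre ▸ hy : y ∈ u ⁻¹' X')]
  · exact (hcl X hXu).1 hX

theorem star_eq_some_of_comap_eq (hc : comap u tp₁ = comap u tp₂)
    (hcl : ∀ X, ¬ X ⊆ range u → (X ∈ tp₁.classes ↔ X ∈ tp₂.classes))
    (hstar : ∀ X ∈ tp₁.classes, ¬ X ⊆ range u → tp₁.star X = tp₂.star X) {X Z : Set (Fin N)}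
    (hXZ : tp₁.star X = some Z) : tp₂.star X = some Z := by
  have hX := mem_classes_of_star_eq_some hXZ
  have hZ := tp₁.star_ran _ _ hXZ
  by_cases hXu : X ⊆ range u
  · by_cases hZu : Z ⊆ range u
    · obtain ⟨y, hy⟩ := (tp₁.classes_nonempty X hX).preimage' hXu
      obtain ⟨z, hz⟩ := (tp₁.classes_nonempty Z hZ).preimage' hZu
      have h₂ : (comap u tp₂).star (u ⁻¹' X) = some (u ⁻¹' Z) :=
        hc ▸ comap_star_eq_some.2 ⟨X, Z, hX, hXZ, rfl, rfl, ⟨y, hy⟩, ⟨z, hz⟩⟩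
      obtain ⟨X', Z', hX', hXZ', hpre, hpre', -⟩ := comap_star_eq_some.1 h₂
      have hX₂ := mem_classes_of_comap_eq hc hcl hX
      have hZ₂ := mem_classes_of_comap_eq hc hcl hZ
      rwa [eq_of_mem_of_mem hX₂ hX' hy (hpre ▸ hy : y ∈ u ⁻¹' X'),
        eq_of_mem_of_mem hZ₂ (tp₂.star_ran _ _ hXZ') hz (hpre' ▸ hz : z ∈ u ⁻¹' Z')]
    · exact tp₂.star_invol _ _ (hstar Z hZ hZu ▸ tp₁.star_invol _ _ hXZ)
  · exact hstar X hX hXu ▸ hXZ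

theorem eq_of_comap_eq (hc : comap u tp₁ = comap u tp₂)
    (hcl : ∀ X, ¬ X ⊆ range u → (X ∈ tp₁.classes ↔ X ∈ tp₂.classes))
    (hstar : ∀ X ∈ tp₁.classes, ¬ X ⊆ range u → tp₁.star X = tp₂.star X) : tp₁ = tp₂ := by
  have hcl' : ∀ X, ¬ X ⊆ range u → (X ∈ tp₂.classes ↔ X ∈ tp₁.classes) :=
    fun X hX => (hcl X hX).symm
  have hstar' : ∀ X ∈ tp₂.classes, ¬ X ⊆ range u → tp₂.star X = tp₁.star X :=
    fun X hX hXu => (hstar X ((hcl X hXu).2 hX) hXu).symm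
  ext1
  · exact Subset.antisymm (fun X => mem_classes_of_comap_eq hc hcl)
      (fun X => mem_classes_of_comap_eq hc.symm hcl')
  · funext X
    ext1 Z
    exact ⟨star_eq_some_of_comap_eq hc hcl hstar, star_eq_some_of_comap_eq hc.symm hcl' hstar'⟩

end EqOfComapEq

section FixedLast

theorem fixedSet_comap {u : Fin m → Fin N} {tp : TaggedPartition N} {P : Set (Fin N)}
    (hP : tp.star P = some P) : (comap u tp).fixedSet = u ⁻¹' P := by
  ext i
  constructor
  · rintro ⟨Y, hY, hiY⟩
    obtain ⟨X, hX, rfl⟩ := (comap_star_eq_some.1 hY).fixed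
    rwa [← tp.star_fixed X P hX hP]
  · intro hi
    exact ⟨_, comap_star_eq_some.2 ⟨P, P, tp.star_ran _ _ hP, hP, rfl, rfl, ⟨i, hi⟩, ⟨i, hi⟩⟩, hi⟩

variable {tp : TaggedPartition (n + 1)} {P : Set (Fin (n + 1))}

theorem snocFixedClass_comap_castSucc (hP : tp.star P = some P) (hlast : Fin.last n ∈ P) :
    (comap Fin.castSucc tp).snocFixedClass = P := by
  rw [snocFixedClass, fixedSet_comap hP, Fin.insert_last_image_preimage_castSucc hlast]

theorem snocFixed_comap_castSucc (hP : tp.star P = some P) (hlast : Fin.last n ∈ P) :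
    snocFixed (comap Fin.castSucc tp) = tp := by
  have hPcl := tp.star_ran _ _ hP
  have hF := snocFixedClass_comap_castSucc hP hlast
  have hout : ∀ {X}, ¬ X ⊆ range Fin.castSucc → Fin.last n ∈ X := fun hX => by
    rwa [Fin.range_castSucc_eq_compl_last, subset_compl_singleton_iff, not_not] at hX
  refine eq_of_comap_eq (comap_castSucc_snocFixed _) (fun X hX => ⟨fun h => ?_, fun h => ?_⟩) ?_
  · rw [eq_snocFixedClass_of_last_mem h (hout hX), hF]
    exact hPcl
  · rw [eq_of_mem_of_mem h hPcl (hout hX) hlast, ← hF]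
    exact snocFixedClass_mem_classes
  · intro X h hX
    rw [eq_snocFixedClass_of_last_mem h (hout hX), snocFixed_star_snocFixedClass, hF, hP]

theorem comap_castSucc_evenlyTagged (h : tp.EvenlyTagged) (hP : tp.star P = some P)
    (hlast : Fin.last n ∈ P) : (comap Fin.castSucc tp).EvenlyTagged := by
  refine comap_evenlyTagged (Fin.castSucc_injective n) h fun X W hXW hne _ => ?_
  have hPcl := tp.star_ran _ _ hP
  have hXP : X ≠ P := by rintro rfl; exact star_ne_some_self hXW hne hP
  have hWP : W ≠ P := star_ne_of_ne hP hXW hXP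
  simp only [Fin.range_castSucc_eq_compl_last, subset_compl_singleton_iff]
  exact ⟨notMem_of_ne hPcl (mem_classes_of_star_eq_some hXW) hlast hXP,
    notMem_of_ne hPcl (tp.star_ran _ _ hXW) hlast hWP⟩

end FixedLast

/-- Data for adjoining a new pair of classes `P₀ ↔ Q₀` to a tagged partition of `Fin m`, whose
points are placed into `Fin N` by `u`. -/
structure PairExtension (m N : ℕ) where
  u : Fin m → Fin N
  P₀ : Set (Fin N)
  Q₀ : Set (Fin N)
  injective : Injective u
  nonempty_P₀ : P₀.Nonempty
  nonempty_Q₀ : Q₀.Nonempty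
  disjoint : Disjoint P₀ Q₀
  range_eq : range u = (P₀ ∪ Q₀)ᶜ

namespace PairExtension

variable (d : PairExtension m N) (tp : TaggedPartition m)

def StarRel (X Z : Set (Fin N)) : Prop :=
  X = d.P₀ ∧ Z = d.Q₀ ∨ X = d.Q₀ ∧ Z = d.P₀ ∨
    ∃ Y W, tp.star Y = some W ∧ d.u '' Y = X ∧ d.u '' W = Z

variable {d tp}

theorem disjoint_P₀_range : Disjoint d.P₀ (range d.u) :=
  d.range_eq ▸ disjoint_compl_right.mono_left subset_union_left

theorem disjoint_Q₀_range : Disjoint d.Q₀ (range d.u) :=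
  d.range_eq ▸ disjoint_compl_right.mono_left subset_union_right

theorem disjoint_image_P₀ (Y : Set (Fin m)) : Disjoint (d.u '' Y) d.P₀ :=
  (disjoint_P₀_range.mono_right (image_subset_range _ _)).symm

theorem disjoint_image_Q₀ (Y : Set (Fin m)) : Disjoint (d.u '' Y) d.Q₀ :=
  (disjoint_Q₀_range.mono_right (image_subset_range _ _)).symm

theorem image_ne_P₀ (Y : Set (Fin m)) : d.u '' Y ≠ d.P₀ := fun h =>
  d.nonempty_P₀.ne_empty (disjoint_self.1 (h ▸ disjoint_image_P₀ (d := d) Y :))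

theorem image_ne_Q₀ (Y : Set (Fin m)) : d.u '' Y ≠ d.Q₀ := fun h =>
  d.nonempty_Q₀.ne_empty (disjoint_self.1 (h ▸ disjoint_image_Q₀ (d := d) Y :))

theorem P₀_ne_Q₀ : d.P₀ ≠ d.Q₀ := fun h =>
  d.nonempty_P₀.ne_empty (disjoint_self.1 (h ▸ d.disjoint))

theorem StarRel.unique {X Z Z' : Set (Fin N)} (h : d.StarRel tp X Z) (h' : d.StarRel tp X Z') :
    Z = Z' := by
  have := d.P₀_ne_Q₀
  rcases h with ⟨rfl, rfl⟩ | ⟨rfl, rfl⟩ | ⟨Y, W, hYW, rfl, rfl⟩ <;>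
    rcases h' with ⟨hX, rfl⟩ | ⟨hX, rfl⟩ | ⟨Y', W', hYW', hX, rfl⟩
  all_goals try first
    | rfl
    | exact absurd hX (by assumption)
    | exact absurd hX.symm (by assumption)
    | exact absurd hX (image_ne_P₀ _)
    | exact absurd hX (image_ne_Q₀ _)
    | exact absurd hX.symm (image_ne_P₀ _)
    | exact absurd hX.symm (image_ne_Q₀ _)
  obtain rfl := image_injective.2 d.injective hX
  rw [Option.some_inj.1 (hYW.symm.trans hYW')]

theorem StarRel.symm {X Z : Set (Fin N)} (h : d.StarRel tp X Z) : d.StarRel tp Z X := by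
  rcases h with ⟨rfl, rfl⟩ | ⟨rfl, rfl⟩ | ⟨Y, W, hYW, rfl, rfl⟩
  · exact Or.inr (Or.inl ⟨rfl, rfl⟩)
  · exact Or.inl ⟨rfl, rfl⟩
  · exact Or.inr (Or.inr ⟨W, Y, tp.star_invol _ _ hYW, rfl, rfl⟩)

theorem StarRel.fixed {X : Set (Fin N)} (h : d.StarRel tp X X) :
    ∃ Y, tp.star Y = some Y ∧ d.u '' Y = X := by
  rcases h with ⟨rfl, h⟩ | ⟨rfl, h⟩ | ⟨Y, W, hYW, rfl, hW⟩
  · exact absurd h d.P₀_ne_Q₀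
  · exact absurd h.symm d.P₀_ne_Q₀
  · obtain rfl := (image_injective.2 d.injective hW).symm
    exact ⟨Y, hYW, rfl⟩

theorem ofFunctionalRel_starRel {X Z : Set (Fin N)} :
    ofFunctionalRel (d.StarRel tp) X = some Z ↔ d.StarRel tp X Z :=
  ofFunctionalRel_eq_some (r := d.StarRel tp) StarRel.unique

variable (d tp)

noncomputable def extend : TaggedPartition N where
  classes := insert d.P₀ (insert d.Q₀ (image d.u '' tp.classes))
  classes_nonempty := by
    rintro _ (rfl | rfl | ⟨Y, hY, rfl⟩)
    · exact d.nonempty_P₀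
    · exact d.nonempty_Q₀
    · exact (tp.classes_nonempty Y hY).image _
  cover i := by
    by_cases hi : i ∈ range d.u
    · obtain ⟨j, rfl⟩ := hi
      obtain ⟨Y, hY, hjY⟩ := tp.cover j
      exact ⟨_, mem_insert_of_mem _ (mem_insert_of_mem _ ⟨Y, hY, rfl⟩), j, hjY, rfl⟩
    · rw [d.range_eq, notMem_compl_iff] at hi
      rcases hi with hi | hi
      · exact ⟨_, mem_insert _ _, hi⟩
      · exact ⟨_, mem_insert_of_mem _ (mem_insert _ _), hi⟩
  eq_of_inter := by
    rintro _ (rfl | rfl | ⟨Y, hY, rfl⟩) _ (rfl | rfl | ⟨Y', hY', rfl⟩) ⟨x, hx, hx'⟩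
    all_goals try first
      | rfl
      | exact absurd hx' (disjoint_left.1 d.disjoint hx)
      | exact absurd hx (disjoint_left.1 d.disjoint hx')
      | exact absurd hx (disjoint_left.1 (disjoint_image_P₀ _) hx')
      | exact absurd hx (disjoint_left.1 (disjoint_image_Q₀ _) hx')
      | exact absurd hx' (disjoint_left.1 (disjoint_image_P₀ _) hx)
      | exact absurd hx' (disjoint_left.1 (disjoint_image_Q₀ _) hx)
    obtain ⟨j, hj, rfl⟩ := hx
    obtain ⟨k, hk, hkj⟩ := hx'
    obtain rfl := d.injective hkj
    rw [eq_of_mem_of_mem hY hY' hj hk]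
  star := ofFunctionalRel (d.StarRel tp)
  star_dom X h := by
    obtain ⟨Z, hZ⟩ := Option.ne_none_iff_exists'.1 h
    rcases ofFunctionalRel_starRel.1 hZ with ⟨rfl, -⟩ | ⟨rfl, -⟩ | ⟨Y, W, hYW, rfl, -⟩
    · exact mem_insert _ _
    · exact mem_insert_of_mem _ (mem_insert _ _)
    · exact mem_insert_of_mem _ (mem_insert_of_mem _ ⟨Y, mem_classes_of_star_eq_some hYW, rfl⟩)
  star_ran X Z h := by
    rcases ofFunctionalRel_starRel.1 h with ⟨-, rfl⟩ | ⟨-, rfl⟩ | ⟨Y, W, hYW, -, rfl⟩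
    · exact mem_insert_of_mem _ (mem_insert _ _)
    · exact mem_insert _ _
    · exact mem_insert_of_mem _ (mem_insert_of_mem _ ⟨W, tp.star_ran _ _ hYW, rfl⟩)
  star_invol X Z h := ofFunctionalRel_starRel.2 (ofFunctionalRel_starRel.1 h).symm
  star_fixed X X' h h' := by
    obtain ⟨Y, hY, rfl⟩ := (ofFunctionalRel_starRel.1 h).fixed
    obtain ⟨Y', hY', rfl⟩ := (ofFunctionalRel_starRel.1 h').fixed
    rw [tp.star_fixed Y Y' hY hY']

variable {d tp} {X Z : Set (Fin N)}

theorem preimage_P₀ : d.u ⁻¹' d.P₀ = ∅ := preimage_eq_empty disjoint_P₀_range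

theorem preimage_Q₀ : d.u ⁻¹' d.Q₀ = ∅ := preimage_eq_empty disjoint_Q₀_range

theorem extend_star_eq_some : (d.extend tp).star X = some Z ↔ d.StarRel tp X Z :=
  ofFunctionalRel_starRel

theorem extend_star_P₀ : (d.extend tp).star d.P₀ = some d.Q₀ :=
  extend_star_eq_some.2 (Or.inl ⟨rfl, rfl⟩)

theorem extend_star_Q₀ : (d.extend tp).star d.Q₀ = some d.P₀ :=
  extend_star_eq_some.2 (Or.inr (Or.inl ⟨rfl, rfl⟩))

theorem extend_evenlyTagged (h : tp.EvenlyTagged) (hcard : d.P₀.ncard = d.Q₀.ncard) :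
    (d.extend tp).EvenlyTagged := by
  refine ⟨?_, fun X Z hXZ => ?_⟩
  · rintro _ (rfl | rfl | ⟨Y, hY, rfl⟩)
    · rw [extend_star_P₀]; exact Option.some_ne_none _
    · rw [extend_star_Q₀]; exact Option.some_ne_none _
    · obtain ⟨W, hYW⟩ := h.1.exists_star_eq_some hY
      rw [extend_star_eq_some.2 (Or.inr (Or.inr ⟨Y, W, hYW, rfl, rfl⟩))]
      exact Option.some_ne_none _
  · rcases extend_star_eq_some.1 hXZ with ⟨rfl, rfl⟩ | ⟨rfl, rfl⟩ | ⟨Y, W, hYW, rfl, rfl⟩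
    · exact hcard
    · exact hcard.symm
    · rw [ncard_image_of_injective _ d.injective, ncard_image_of_injective _ d.injective]
      exact h.2 Y W hYW

theorem P₀_mem_extend_classes : d.P₀ ∈ (d.extend tp).classes := mem_insert _ _

theorem Q₀_mem_extend_classes : d.Q₀ ∈ (d.extend tp).classes :=
  mem_insert_of_mem _ (mem_insert _ _)

theorem P₀_eq_and_Q₀_eq_of_extend_eq {m' : ℕ} {d' : PairExtension m' N}
    {tq : TaggedPartition m'} {x : Fin N} (hx : x ∈ d.P₀) (hx' : x ∈ d'.P₀)
    (h : d.extend tp = d'.extend tq) : d.P₀ = d'.P₀ ∧ d.Q₀ = d'.Q₀ := by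
  have hP : d.P₀ = d'.P₀ :=
    eq_of_mem_of_mem (h ▸ P₀_mem_extend_classes) P₀_mem_extend_classes hx hx'
  have hQ : (d'.extend tq).star d.P₀ = some d.Q₀ := h ▸ extend_star_P₀
  rw [hP, extend_star_P₀] at hQ
  exact ⟨hP, (Option.some_inj.1 hQ).symm⟩

theorem mem_comap_extend_classes {Y : Set (Fin m)} :
    Y ∈ (comap d.u (d.extend tp)).classes ↔ Y ∈ tp.classes := by
  rw [mem_comap_classes]
  constructor
  · rintro ⟨_, rfl | rfl | ⟨Y', hY', rfl⟩, rfl, hYne⟩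
    · exact absurd hYne (preimage_P₀ ▸ not_nonempty_empty)
    · exact absurd hYne (preimage_Q₀ ▸ not_nonempty_empty)
    · rwa [preimage_image_eq _ d.injective]
  · exact fun hY => ⟨_, mem_insert_of_mem _ (mem_insert_of_mem _ ⟨Y, hY, rfl⟩),
      preimage_image_eq _ d.injective, tp.classes_nonempty Y hY⟩

theorem comap_extend_star_eq_some {Y Z : Set (Fin m)} :
    (comap d.u (d.extend tp)).star Y = some Z ↔ tp.star Y = some Z := by
  have hpre : ∀ Y, d.u ⁻¹' (d.u '' Y) = Y := fun Y => preimage_image_eq Y d.injective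
  rw [comap_star_eq_some]
  constructor
  · rintro ⟨X, W, -, hXW, rfl, rfl, hYne, -⟩
    rcases extend_star_eq_some.1 hXW with ⟨rfl, -⟩ | ⟨rfl, -⟩ | ⟨Y', W', hYW', rfl, rfl⟩
    · exact absurd hYne (preimage_P₀ ▸ not_nonempty_empty)
    · exact absurd hYne (preimage_Q₀ ▸ not_nonempty_empty)
    · rwa [hpre, hpre]
  · intro hYZ
    have hY := mem_classes_of_star_eq_some hYZ
    exact ⟨_, _, mem_insert_of_mem _ (mem_insert_of_mem _ ⟨Y, hY, rfl⟩),
      extend_star_eq_some.2 (Or.inr (Or.inr ⟨Y, Z, hYZ, rfl, rfl⟩)), hpre Y, hpre Z,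
      tp.classes_nonempty _ hY, tp.classes_nonempty _ (tp.star_ran _ _ hYZ)⟩

theorem comap_extend (tp : TaggedPartition m) : comap d.u (d.extend tp) = tp :=
  ext (Set.ext fun _ => mem_comap_extend_classes)
    (funext fun _ => Option.ext fun _ => comap_extend_star_eq_some)

theorem subset_range_of_ne {tp : TaggedPartition N} (hP₀ : d.P₀ ∈ tp.classes)
    (hQ₀ : d.Q₀ ∈ tp.classes) (hX : X ∈ tp.classes) (hXP : X ≠ d.P₀) (hXQ : X ≠ d.Q₀) :
    X ⊆ range d.u := by
  intro x hx
  rw [d.range_eq]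
  rintro (hxP | hxQ)
  · exact hXP (eq_of_mem_of_mem hX hP₀ hx hxP)
  · exact hXQ (eq_of_mem_of_mem hX hQ₀ hx hxQ)

theorem eq_P₀_or_eq_Q₀_of_not_subset_range {tp : TaggedPartition N} (hP₀ : d.P₀ ∈ tp.classes)
    (hQ₀ : d.Q₀ ∈ tp.classes) (hX : X ∈ tp.classes) (hXu : ¬ X ⊆ range d.u) :
    X = d.P₀ ∨ X = d.Q₀ := by
  by_contra! h
  exact hXu (subset_range_of_ne hP₀ hQ₀ hX h.1 h.2)

variable {tp : TaggedPartition N}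

theorem extend_comap (hP₀ : tp.star d.P₀ = some d.Q₀) : d.extend (comap d.u tp) = tp := by
  have hP₀cl := mem_classes_of_star_eq_some hP₀
  have hQ₀cl := tp.star_ran _ _ hP₀
  have hP₀ext : d.P₀ ∈ (d.extend (comap d.u tp)).classes := P₀_mem_extend_classes
  have hQ₀ext : d.Q₀ ∈ (d.extend (comap d.u tp)).classes := Q₀_mem_extend_classes
  refine eq_of_comap_eq (comap_extend _) (fun X hXu => ⟨fun hX => ?_, fun hX => ?_⟩) ?_
  · rcases eq_P₀_or_eq_Q₀_of_not_subset_range hP₀ext hQ₀ext hX hXu with rfl | rfl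
    exacts [hP₀cl, hQ₀cl]
  · rcases eq_P₀_or_eq_Q₀_of_not_subset_range hP₀cl hQ₀cl hX hXu with rfl | rfl
    exacts [hP₀ext, hQ₀ext]
  · intro X hX hXu
    rcases eq_P₀_or_eq_Q₀_of_not_subset_range hP₀ext hQ₀ext hX hXu with rfl | rfl
    · rw [extend_star_P₀, hP₀]
    · rw [extend_star_Q₀, tp.star_invol _ _ hP₀]

theorem comap_evenlyTagged_of_star_P₀ (h : tp.EvenlyTagged) (hP₀ : tp.star d.P₀ = some d.Q₀) :
    (comap d.u tp).EvenlyTagged := by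
  have hP₀cl := mem_classes_of_star_eq_some hP₀
  have hQ₀cl := tp.star_ran _ _ hP₀
  refine comap_evenlyTagged d.injective h fun X W hXW _ hXne => ?_
  have hXP : X ≠ d.P₀ := by rintro rfl; rw [preimage_P₀] at hXne; exact not_nonempty_empty hXne
  have hXQ : X ≠ d.Q₀ := by rintro rfl; rw [preimage_Q₀] at hXne; exact not_nonempty_empty hXne
  exact ⟨subset_range_of_ne hP₀cl hQ₀cl (mem_classes_of_star_eq_some hXW) hXP hXQ,
    subset_range_of_ne hP₀cl hQ₀cl (tp.star_ran _ _ hXW)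
      (star_ne_of_ne hP₀ hXW hXQ) (star_ne_of_ne (tp.star_invol _ _ hP₀) hXW hXP)⟩

end PairExtension

/-- The possible pairs `P ∋ Fin.last n`, `Q = P*` with `P ≠ Q` and `#P = #Q` in a tagged partition
of `Fin (n + 1)`, recorded as the pair `(P \ {Fin.last n}, Q)` pulled back to `Fin n`. -/
abbrev LastPair (n : ℕ) :=
  {p : Finset (Fin n) × Finset (Fin n) // Disjoint p.1 p.2 ∧ p.2.card = p.1.card + 1}

namespace LastPair

def rest (i : LastPair n) : Finset (Fin n) := (i.1.1 ∪ i.1.2)ᶜ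

def restCard (i : LastPair n) : ℕ := n - (2 * i.1.1.card + 1)

theorem card_rest (i : LastPair n) : i.rest.card = i.restCard := by
  rw [rest, Finset.card_compl, Finset.card_union_of_disjoint i.2.1, i.2.2, restCard,
    Fintype.card_fin]
  omega

noncomputable def toPairExtension (i : LastPair n) : PairExtension i.restCard (n + 1) where
  u := Fin.castSucc ∘ i.rest.orderEmbOfFin i.card_rest
  P₀ := insert (Fin.last n) (Fin.castSucc '' i.1.1)
  Q₀ := Fin.castSucc '' i.1.2
  injective := (Fin.castSucc_injective n).comp (i.rest.orderEmbOfFin i.card_rest).injective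
  nonempty_P₀ := insert_nonempty _ _
  nonempty_Q₀ := by
    refine (Finset.coe_nonempty.2 (Finset.card_pos.1 ?_)).image _
    rw [i.2.2]
    exact Nat.succ_pos _
  disjoint := by
    rw [disjoint_insert_left, disjoint_image_iff (Fin.castSucc_injective n), Finset.disjoint_coe]
    exact ⟨Fin.last_notMem_image_castSucc _, i.2.1⟩
  range_eq := by
    rw [range_comp, Finset.range_orderEmbOfFin, rest, Finset.coe_compl, Fin.image_castSucc_compl,
      Finset.coe_union, image_union, insert_union]

theorem last_mem_P₀ (i : LastPair n) : Fin.last n ∈ i.toPairExtension.P₀ := mem_insert _ _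

theorem ncard_P₀_eq_ncard_Q₀ (i : LastPair n) :
    i.toPairExtension.P₀.ncard = i.toPairExtension.Q₀.ncard := by
  simp only [toPairExtension]
  rw [ncard_insert_of_notMem (Fin.last_notMem_image_castSucc _),
    ncard_image_of_injective _ (Fin.castSucc_injective n),
    ncard_image_of_injective _ (Fin.castSucc_injective n), ncard_coe_finset, ncard_coe_finset,
    i.2.2]

theorem eq_of_toPairExtension {i i' : LastPair n}
    (hP : i.toPairExtension.P₀ = i'.toPairExtension.P₀)
    (hQ : i.toPairExtension.Q₀ = i'.toPairExtension.Q₀) : i = i' := by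
  have hS := congrArg (Fin.castSucc ⁻¹' ·) hP
  simp only [toPairExtension, Fin.preimage_castSucc_insert_last] at hS
  exact Subtype.ext (Prod.ext (Finset.coe_injective hS)
    (Finset.coe_injective (image_injective.2 (Fin.castSucc_injective n) hQ)))

theorem exists_eq {P Q : Set (Fin (n + 1))} (hP : Fin.last n ∈ P) (hQ : Fin.last n ∉ Q)
    (hPQ : Disjoint P Q) (hcard : P.ncard = Q.ncard) :
    ∃ i : LastPair n, i.toPairExtension.P₀ = P ∧ i.toPairExtension.Q₀ = Q := by
  set S := (toFinite (Fin.castSucc ⁻¹' P)).toFinset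
  set T := (toFinite (Fin.castSucc ⁻¹' Q)).toFinset
  have hS : (S : Set (Fin n)) = Fin.castSucc ⁻¹' P := Finite.coe_toFinset _
  have hT : (T : Set (Fin n)) = Fin.castSucc ⁻¹' Q := Finite.coe_toFinset _
  have hP' : insert (Fin.last n) (Fin.castSucc '' S) = P := by
    rw [hS, Fin.insert_last_image_preimage_castSucc hP]
  have hQ' : Fin.castSucc '' T = Q := by
    rw [hT, image_preimage_eq_of_subset]
    rwa [Fin.range_castSucc_eq_compl_last, subset_compl_singleton_iff]
  refine ⟨⟨(S, T), ?_, ?_⟩, hP', hQ'⟩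
  · rw [← Finset.disjoint_coe, hS, hT]
    exact hPQ.preimage _
  · rw [← ncard_coe_finset T, ← ncard_coe_finset S,
      ← ncard_image_of_injective _ (Fin.castSucc_injective n), hQ', ← hcard, ← hP',
      ncard_insert_of_notMem (Fin.last_notMem_image_castSucc _),
      ncard_image_of_injective _ (Fin.castSucc_injective n)]

end LastPair

theorem snocFixed_ne_extend {d : PairExtension m (n + 1)} (hlast : Fin.last n ∈ d.P₀)
    (tp : TaggedPartition n) (tq : TaggedPartition m) : snocFixed tp ≠ d.extend tq := by
  intro h
  have hF : tp.snocFixedClass = d.P₀ :=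
    eq_of_mem_of_mem (h ▸ snocFixedClass_mem_classes) PairExtension.P₀_mem_extend_classes
      last_mem_snocFixedClass hlast
  have hstar : (d.extend tq).star d.P₀ = some d.P₀ := hF ▸ h ▸ snocFixed_star_snocFixedClass
  rw [PairExtension.extend_star_P₀] at hstar
  exact d.P₀_ne_Q₀ (Option.some_inj.1 hstar).symm

abbrev EvenlyTaggedPartition (n : ℕ) := {tp : TaggedPartition n // tp.EvenlyTagged}

noncomputable def extendLast :
    EvenlyTaggedPartition n ⊕ (Σ i : LastPair n, EvenlyTaggedPartition i.restCard) →
      EvenlyTaggedPartition (n + 1)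
  | .inl tp => ⟨snocFixed tp, snocFixed_evenlyTagged tp.2⟩
  | .inr ⟨i, tp⟩ => ⟨i.toPairExtension.extend tp,
      PairExtension.extend_evenlyTagged tp.2 i.ncard_P₀_eq_ncard_Q₀⟩

theorem extendLast_injective : Injective (extendLast (n := n)) := by
  rintro (tp | ⟨i, tp⟩) (tq | ⟨i', tq⟩) h <;> replace h := congrArg Subtype.val h <;>
    simp only [extendLast] at h
  · exact congrArg Sum.inl
      (Subtype.ext (by rw [← comap_castSucc_snocFixed tp.1, h, comap_castSucc_snocFixed]))
  · exact absurd h (snocFixed_ne_extend i'.last_mem_P₀ _ _)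
  · exact absurd h.symm (snocFixed_ne_extend i.last_mem_P₀ _ _)
  · obtain ⟨hP, hQ⟩ :=
      PairExtension.P₀_eq_and_Q₀_eq_of_extend_eq i.last_mem_P₀ i'.last_mem_P₀ h
    obtain rfl := LastPair.eq_of_toPairExtension hP hQ
    have := congrArg (comap i.toPairExtension.u) h
    rw [PairExtension.comap_extend, PairExtension.comap_extend] at this
    rw [Subtype.ext this]

theorem extendLast_surjective : Surjective (extendLast (n := n)) := by
  rintro ⟨tp, h⟩
  obtain ⟨P, hP, hlast⟩ := tp.cover (Fin.last n)
  obtain ⟨Q, hPQ⟩ := h.1.exists_star_eq_some hP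
  obtain rfl | hne := eq_or_ne P Q
  · exact ⟨.inl ⟨_, comap_castSucc_evenlyTagged h hPQ hlast⟩,
      Subtype.ext (snocFixed_comap_castSucc hPQ hlast)⟩
  · have hQ := tp.star_ran _ _ hPQ
    obtain ⟨i, hiP, hiQ⟩ := LastPair.exists_eq hlast (notMem_of_ne hP hQ hlast hne.symm)
      (disjoint_of_ne hP hQ hne) (h.2 P Q hPQ)
    have hP₀ : tp.star i.toPairExtension.P₀ = some i.toPairExtension.Q₀ := by rw [hiP, hiQ, hPQ]
    exact ⟨.inr ⟨i, _, PairExtension.comap_evenlyTagged_of_star_P₀ h hP₀⟩,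
      Subtype.ext (PairExtension.extend_comap hP₀)⟩

theorem card_evenlyTaggedPartition_succ (n : ℕ) :
    Nat.card (EvenlyTaggedPartition (n + 1)) = Nat.card (EvenlyTaggedPartition n) +
      ∑ i : LastPair n, Nat.card (EvenlyTaggedPartition i.restCard) := by
  rw [← Nat.card_congr (Equiv.ofBijective _ ⟨extendLast_injective, extendLast_surjective⟩),
    Nat.card_sum, Nat.card_sigma]

theorem sum_lastPair_card_eq (g : ℕ → ℕ) :
    ∑ i : LastPair n, g i.1.1.card =
      ∑ l ∈ Finset.range (n + 1), n.choose l * (n - l).choose (l + 1) * g l := by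
  rw [← Finset.sum_subtype (Finset.univ.filter fun p : Finset (Fin n) × Finset (Fin n) =>
      Disjoint p.1 p.2 ∧ p.2.card = p.1.card + 1) (by simp) (fun p => g p.1.card),
    Finset.sum_filter, Fintype.sum_prod_type]
  have hinner : ∀ S : Finset (Fin n),
      ∑ T, (if Disjoint S T ∧ T.card = S.card + 1 then g S.card else 0) =
        (n - S.card).choose (S.card + 1) * g S.card := by
    intro S
    rw [← Finset.sum_filter, Finset.filter_disjoint_card_eq_powersetCard, Finset.sum_const,
      Finset.card_powersetCard, Finset.card_compl, Fintype.card_fin, smul_eq_mul]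
  simp only [hinner]
  rw [← Finset.powerset_univ,
    Finset.sum_powerset_apply_card (fun l => (n - l).choose (l + 1) * g l), Finset.card_univ,
    Fintype.card_fin]
  simp only [smul_eq_mul, mul_assoc]

theorem sum_lastPair_eq_sum_filter (f : ℕ → ℕ) :
    ∑ i : LastPair n, f i.restCard =
      ∑ q ∈ (Finset.range (n + 1) ×ˢ Finset.range (n + 1)).filter
          (fun q => q.1 + 2 * q.2 + 1 = n),
        n.factorial / (q.1.factorial * q.2.factorial * (q.2 + 1).factorial) * f q.1 := by
  rw [Finset.sum_filter_add_two_mul_add_one_eq (fun k l =>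
    n.factorial / (k.factorial * l.factorial * (l + 1).factorial) * f k)]
  refine (sum_lastPair_card_eq fun l => f (n - (2 * l + 1))).trans
    (Finset.sum_congr rfl fun l _ => ?_)
  split_ifs with h
  · rw [Nat.choose_mul_choose_eq_factorial_div h]
  · rw [Nat.choose_eq_zero_of_lt (n := n - l) (k := l + 1) (by omega), mul_zero, zero_mul]

end TaggedPartition

/-- Proposition 7.16, recurrence for `e_n`. With
`e n = Nat.card {tp : TaggedPartition n // tp.EvenlyTagged}` (so `e 0 = 1`),
`e_{n+1} = e_n + ∑_{k+2ℓ+1=n} n!/(k!·ℓ!·(ℓ+1)!) · e_k`. -/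
theorem recurrence_evenlyTagged (n : ℕ) :
    Nat.card {tp : TaggedPartition (n + 1) // tp.EvenlyTagged} =
      Nat.card {tp : TaggedPartition n // tp.EvenlyTagged} +
      ∑ q ∈ (Finset.range (n + 1) ×ˢ Finset.range (n + 1)).filter
          (fun q => q.1 + 2 * q.2 + 1 = n),
        (Nat.factorial n /
          (Nat.factorial q.1 * Nat.factorial q.2 * Nat.factorial (q.2 + 1))) *
          Nat.card {tp : TaggedPartition q.1 // tp.EvenlyTagged} :=
  (TaggedPartition.card_evenlyTaggedPartition_succ n).trans
    (congrArg _ (TaggedPartition.sum_lastPair_eq_sum_filter fun k =>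
      Nat.card {tp : TaggedPartition k // tp.EvenlyTagged}))
end
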